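/- arXiv:2107.00461 — 10 statements merged into one kernel-verified Lean document; each statement's English description precedes it below -/
import Mathlib

section
/- For every finite sequence (a_1,…,a_t) of positive integers one has ⟨a_1,…,a_t⟩ ≥ (1/2)·Φ^t · ∏_{i : a_i > 1} (a_i/4), where the product runs over all indices i with a_i > 1 and Φ = (1+√5)/2. -/
/-- Head-recursion continuant helper. -/
def contAux : List ℕ → ℕ
  | [] => 1
  | [a] => a
  | a :: b :: l => a * contAux (b :: l) + contAux l

/-- The continuant `⟨a_1,…,a_t⟩`, satisfying `⟨⟩ = 1`, `⟨a⟩ = a` and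
`⟨a_1,…,a_t⟩ = a_t⟨a_1,…,a_{t-1}⟩ + ⟨a_1,…,a_{t-2}⟩`. -/
def cont (l : List ℕ) : ℕ := contAux l.reverse

noncomputable def Phi : ℝ := (1 + Real.sqrt 5) / 2

/-!
Write `w(m) = ½ Φ^|m| ∏_{b ∈ m, b > 1} (b/4)`, so that `w(1 :: m) = Φ w(m)` and
`w(a :: m) = Φ (a/4) w(m)` for `a ≥ 2`. By induction on `m` one proves the pair of bounds
`⟨m⟩ ≥ w(m)` and `⟨m⟩ + ⟨tail m⟩ ≥ Φ w(m)`. A leading `1` turns the pair `(⟨m⟩, ⟨tail m⟩)` into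
`(⟨m⟩ + ⟨tail m⟩, ⟨m⟩)`, and the bounds propagate because `Φ² = Φ + 1`; a leading `a ≥ 2`
multiplies by at least `a`, which beats the factor `Φ² a/4` lost in `w` since `Φ² < 4`.
-/

open Real

lemma Phi_pos : 0 < Phi := goldenRatio_pos

lemma Phi_lt_two : Phi < 2 := goldenRatio_lt_two

lemma Phi_sq : Phi ^ 2 = Phi + 1 := goldenRatio_sq

/-- `contAuxTail [] = 0` plays the role of the continuant of length `-1`, which makes
`contAux_cons` hold also for `m = []`. -/
def contAuxTail : List ℕ → ℕ
  | [] => 0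
  | _ :: m => contAux m

lemma contAux_cons (a : ℕ) (m : List ℕ) :
    contAux (a :: m) = a * contAux m + contAuxTail m := by
  cases m <;> simp [contAux, contAuxTail]

noncomputable def quarterProd (m : List ℕ) : ℝ :=
  ((m.filter (1 < ·)).map fun b : ℕ => (b : ℝ) / 4).prod

/-- In the statement of `stmt4` the cast `(b : ℝ)` is elaborated by lifting the whole filtered
list to `List ℝ` (a monadic coercion), not pointwise inside the `map`. -/
lemma quarterProd_eq_prod_coe (m : List ℕ) :
    quarterProd m = ((m.filter (fun b => 1 < b)).map (fun b => (b : ℝ) / 4)).prod := by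
  simp only [quarterProd, List.pure_def, List.bind_eq_flatMap]
  rw [show (fun a : ℕ => [(a : ℝ)]) = pure ∘ Nat.cast from rfl, List.flatMap_pure_eq_map,
    List.map_map]
  rfl

lemma quarterProd_nonneg (m : List ℕ) : 0 ≤ quarterProd m :=
  List.prod_nonneg fun _ hx => by
    obtain ⟨b, -, rfl⟩ := List.mem_map.mp hx
    positivity

lemma quarterProd_reverse (m : List ℕ) : quarterProd m.reverse = quarterProd m :=
  (((List.reverse_perm m).filter _).map _).prod_eq

lemma quarterProd_one_cons (m : List ℕ) : quarterProd (1 :: m) = quarterProd m := by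
  simp [quarterProd]

lemma quarterProd_cons_of_one_lt {a : ℕ} (ha : 1 < a) (m : List ℕ) :
    quarterProd (a :: m) = a / 4 * quarterProd m := by
  simp [quarterProd, ha]

noncomputable def contLowerBound (m : List ℕ) : ℝ :=
  1 / 2 * Phi ^ m.length * quarterProd m

lemma contLowerBound_nonneg (m : List ℕ) : 0 ≤ contLowerBound m := by
  have := quarterProd_nonneg m
  have := Phi_pos
  unfold contLowerBound
  positivity

lemma contLowerBound_one_cons (m : List ℕ) :
    contLowerBound (1 :: m) = Phi * contLowerBound m := by
  rw [contLowerBound, contLowerBound, quarterProd_one_cons, List.length_cons]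
  ring

lemma contLowerBound_cons_of_one_lt {a : ℕ} (ha : 1 < a) (m : List ℕ) :
    contLowerBound (a :: m) = Phi * (a / 4) * contLowerBound m := by
  rw [contLowerBound, contLowerBound, quarterProd_cons_of_one_lt ha, List.length_cons]
  ring

theorem contLowerBound_le_contAux (m : List ℕ) (hpos : ∀ b ∈ m, 0 < b) :
    contLowerBound m ≤ contAux m ∧ Phi * contLowerBound m ≤ contAux m + contAuxTail m := by
  induction m with
  | nil =>
    simp only [contLowerBound, quarterProd, contAux, contAuxTail]
    norm_num
    linarith [Phi_lt_two]
  | cons a m ih =>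
    obtain ⟨hw, hwΦ⟩ := ih fun b hb => hpos b (List.mem_cons_of_mem a hb)
    have hw0 := contLowerBound_nonneg m
    have hΦ := Phi_sq
    have hΦ2 := Phi_lt_two
    have htail : contAuxTail (a :: m) = contAux m := rfl
    rw [htail, contAux_cons]
    have ha1 : 1 ≤ a := hpos a List.mem_cons_self
    rcases ha1.lt_or_eq with ha | rfl
    · rw [contLowerBound_cons_of_one_lt ha]
      have haw : (a : ℝ) * contLowerBound m ≤ a * contAux m :=
        mul_le_mul_of_nonneg_left hw (by positivity)
      have haw0 : 0 ≤ (a : ℝ) * contLowerBound m := by positivity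
      push_cast
      constructor
      · nlinarith [mul_nonneg (by linarith : 0 ≤ 4 - Phi) haw0]
      · nlinarith [mul_nonneg (by linarith : 0 ≤ 3 - Phi) haw0]
    · rw [contLowerBound_one_cons]
      push_cast
      constructor <;> nlinarith

/-- For positive integers `a_1,…,a_t` one has
`⟨a_1,…,a_t⟩ ≥ (1/2) Φ^t ∏_{i : a_i > 1} (a_i / 4)`. -/
theorem stmt4 (l : List ℕ) (hpos : ∀ b ∈ l, 0 < b) :
    (cont l : ℝ) ≥
      1 / 2 * Phi ^ l.length * ((l.filter (fun b => 1 < b)).map (fun b => (b : ℝ) / 4)).prod := by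
  have h := (contLowerBound_le_contAux l.reverse fun b hb => hpos b (List.mem_reverse.mp hb)).1
  rwa [contLowerBound, quarterProd_reverse, List.length_reverse, quarterProd_eq_prod_coe] at h
end

section
/- Let x ∈ (0,1) be irrational and suppose that the derivative ?'(x) of the Minkowski question-mark function exists at x and equals 0. Then there exists T such that for all positive integers t > T one has S_x(t) − κ₁·t > 0. -/
open Filter Topology

/-- `S_x(t) = a_1 + ⋯ + a_t` where `a i` denotes `a_{i+1}`. -/
def cfSum (a : ℕ → ℕ) (t : ℕ) : ℕ := ∑ i ∈ Finset.range t, a i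

/-- `x = [0;a_1,a_2,…]`: all partial quotients are positive and the convergents
`⟨a_2,…,a_t⟩ / ⟨a_1,…,a_t⟩` tend to `x`. -/
def IsCFOf (x : ℝ) (a : ℕ → ℕ) : Prop :=
  (∀ i, 0 < a i) ∧
  Filter.Tendsto
    (fun t => ((cont (((List.range t).map a).tail) : ℝ) / (cont ((List.range t).map a) : ℝ)))
    Filter.atTop (nhds x)

noncomputable def kappa1 : ℝ := 2 * Real.log Phi / Real.log 2
noncomputable def kappa4 : ℝ := Real.sqrt ((kappa1 - 1) / Real.log 2)

/-- `Q` is the Minkowski question-mark function: continuous and strictly increasing on `[0,1]`,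
`Q 0 = 0`, `Q 1 = 1`, and given on irrationals by the Denjoy–Salem series. -/
def IsMinkowski (Q : ℝ → ℝ) : Prop :=
  ContinuousOn Q (Set.Icc 0 1) ∧ StrictMonoOn Q (Set.Icc 0 1) ∧
  Q 0 = 0 ∧ Q 1 = 1 ∧
  ∀ x ∈ Set.Ioo (0:ℝ) 1, Irrational x → ∀ a : ℕ → ℕ, IsCFOf x a →
    Q x = ∑' k : ℕ, (-1 : ℝ) ^ k * (2 : ℝ) ^ ((1 : ℤ) - (cfSum a (k+1) : ℤ))

/-!
For `t ≥ 1` let `u = [0; a₁, …, a_t, 2, 1, 1, …]` and `v = [0; a₁, …, a_t, 1, 1, …]`.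
Both share their first `t` partial quotients with `x`, and continuants grow at least like
Fibonacci numbers, so `u`, `v` and `x` lie within `O(φ^(-2t))` of the `t`-th convergent.
Their Denjoy–Salem series differ only in a geometric tail, which gives
`|?(v) - ?(u)| = 2^(-S_x(t)) / 3`. If `?'(x) = 0`, this is `o(φ^(-2t))`, so
`2^(-S_x(t)) < φ^(-2t)` for large `t`, i.e. `S_x(t) > κ₁ t`.
-/
open Real goldenRatio

lemma reverse_map_range_succ {α : Type*} (f : ℕ → α) (n : ℕ) :
    ((List.range (n + 1)).map f).reverse = f n :: ((List.range n).map f).reverse := by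
  simp [List.range_succ]

def cfDen (c : ℕ → ℕ) (n : ℕ) : ℕ := cont ((List.range n).map c)

/-- The tail of the empty list is empty, so `cfNum c 0 = 1` rather than `p₀ = 0`; for `n ≥ 1`,
`cfNum c n / cfDen c n` is the convergent `[0; c 0, …, c (n-1)]`. -/
def cfNum (c : ℕ → ℕ) (n : ℕ) : ℕ := cont ((List.range n).map c).tail

section Continuants

variable {c : ℕ → ℕ}

@[simp] lemma cfDen_zero : cfDen c 0 = 1 := rfl

@[simp] lemma cfDen_one : cfDen c 1 = c 0 := rfl

lemma cfDen_add_two (n : ℕ) : cfDen c (n + 2) = c (n + 1) * cfDen c (n + 1) + cfDen c n := by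
  unfold cfDen cont
  rw [reverse_map_range_succ c (n + 1), reverse_map_range_succ c n]
  rfl

lemma cfNum_succ (n : ℕ) : cfNum c (n + 1) = cfDen (fun i => c (i + 1)) n := by
  simp only [cfNum, cfDen, List.range_succ_eq_map, List.map_cons, List.tail_cons, List.map_map]
  rfl

lemma cfNum_add_three (n : ℕ) :
    cfNum c (n + 3) = c (n + 2) * cfNum c (n + 2) + cfNum c (n + 1) := by
  simp only [cfNum_succ, cfDen_add_two]

lemma cfDen_pos (hc : ∀ i, 0 < c i) : ∀ n, 0 < cfDen c n
  | 0 => Nat.one_pos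
  | 1 => hc 0
  | n + 2 => by rw [cfDen_add_two]; exact Nat.add_pos_right _ (cfDen_pos hc n)

lemma cfDen_le_succ (hc : ∀ i, 0 < c i) : ∀ n, cfDen c n ≤ cfDen c (n + 1)
  | 0 => hc 0
  | n + 1 => by
    rw [cfDen_add_two]
    exact (Nat.le_mul_of_pos_left _ (hc (n + 1))).trans (Nat.le_add_right _ _)

lemma two_mul_cfDen_le (hc : ∀ i, 0 < c i) (n : ℕ) : 2 * cfDen c n ≤ cfDen c (n + 2) := by
  have := cfDen_le_succ hc n
  have := Nat.le_mul_of_pos_left (cfDen c (n + 1)) (hc (n + 1))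
  rw [cfDen_add_two]
  omega

lemma le_cfDen (hc : ∀ i, 0 < c i) : ∀ n, n ≤ cfDen c n
  | 0 => Nat.zero_le _
  | 1 => hc 0
  | n + 2 => by
    have := le_cfDen hc (n + 1)
    have := cfDen_pos hc n
    have := Nat.le_mul_of_pos_left (cfDen c (n + 1)) (hc (n + 1))
    rw [cfDen_add_two]
    omega

lemma cfNum_le_cfDen (hc : ∀ i, 0 < c i) : ∀ n, cfNum c n ≤ cfDen c n
  | 0 => le_rfl
  | 1 => hc 0
  | 2 => by
    rw [cfNum_succ, cfDen_add_two]
    simp only [cfDen_one, cfDen_zero, zero_add]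
    exact (Nat.le_mul_of_pos_right _ (hc 0)).trans (Nat.le_add_right _ _)
  | n + 3 => by
    rw [cfNum_add_three, cfDen_add_two]
    gcongr
    · exact cfNum_le_cfDen hc (n + 2)
    · exact cfNum_le_cfDen hc (n + 1)

lemma goldenRatio_pow_le_mul_cfDen (hc : ∀ i, 0 < c i) : ∀ n, φ ^ n ≤ φ * cfDen c n
  | 0 => by simpa using one_lt_goldenRatio.le
  | 1 => by
    have : (1 : ℝ) ≤ c 0 := by exact_mod_cast hc 0
    simpa using mul_le_mul_of_nonneg_left this goldenRatio_pos.le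
  | n + 2 => by
    have h₁ := goldenRatio_pow_le_mul_cfDen hc (n + 1)
    have h₀ := goldenRatio_pow_le_mul_cfDen hc n
    have hrec : (cfDen c (n + 1) : ℝ) + cfDen c n ≤ cfDen c (n + 2) := by
      rw [cfDen_add_two]
      push_cast
      gcongr
      exact le_mul_of_one_le_left (Nat.cast_nonneg _) (by exact_mod_cast hc (n + 1))
    calc φ ^ (n + 2) = φ ^ (n + 1) + φ ^ n := by
          rw [← goldenRatio_pow_sub_goldenRatio_pow n]; ring
      _ ≤ φ * (cfDen c (n + 1) + cfDen c n) := by linarith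
      _ ≤ φ * cfDen c (n + 2) := by gcongr

lemma cfNum_mul_cfDen_sub (n : ℕ) :
    (cfNum c (n + 2) : ℤ) * cfDen c (n + 1) - cfNum c (n + 1) * cfDen c (n + 2)
      = (-1) ^ (n + 1) := by
  induction n with
  | zero => simp [cfNum_succ, cfDen_add_two]
  | succ n ih =>
    rw [cfNum_add_three, cfDen_add_two (n + 1)]
    push_cast at ih ⊢
    linear_combination (-1 : ℤ) * ih

end Continuants

noncomputable def cfConvergent (c : ℕ → ℕ) (n : ℕ) : ℝ := cfNum c n / cfDen c n

noncomputable def cfGap (c : ℕ → ℕ) (n : ℕ) : ℝ := ((cfDen c n : ℝ) * cfDen c (n + 1))⁻¹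

section Convergents

variable {c : ℕ → ℕ}

lemma cfConvergent_congr {b : ℕ → ℕ} {n : ℕ} (h : ∀ i < n, b i = c i) :
    cfConvergent b n = cfConvergent c n := by
  have : (List.range n).map b = (List.range n).map c :=
    List.map_congr_left fun i hi => h i (List.mem_range.mp hi)
  simp only [cfConvergent, cfNum, cfDen, this]

lemma cfConvergent_mem_Icc (hc : ∀ i, 0 < c i) (n : ℕ) : cfConvergent c n ∈ Set.Icc 0 1 :=
  ⟨by unfold cfConvergent; positivity,
    div_le_one_of_le₀ (by exact_mod_cast cfNum_le_cfDen hc n) (Nat.cast_nonneg _)⟩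

lemma cfGap_pos (hc : ∀ i, 0 < c i) (n : ℕ) : 0 < cfGap c n := by
  have := cfDen_pos hc n
  have := cfDen_pos hc (n + 1)
  unfold cfGap
  positivity

lemma cfConvergent_add_two_sub (hc : ∀ i, 0 < c i) (n : ℕ) :
    cfConvergent c (n + 2) - cfConvergent c (n + 1) = (-1) ^ (n + 1) * cfGap c (n + 1) := by
  have hdet : (cfNum c (n + 2) : ℝ) * cfDen c (n + 1) - cfNum c (n + 1) * cfDen c (n + 2)
      = (-1) ^ (n + 1) := by exact_mod_cast cfNum_mul_cfDen_sub n
  have h₁ : (cfDen c (n + 1) : ℝ) ≠ 0 := by exact_mod_cast (cfDen_pos hc _).ne'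
  have h₂ : (cfDen c (n + 2) : ℝ) ≠ 0 := by exact_mod_cast (cfDen_pos hc _).ne'
  unfold cfConvergent cfGap
  field_simp
  linear_combination hdet

lemma dist_cfConvergent (hc : ∀ i, 0 < c i) (n : ℕ) :
    dist (cfConvergent c (n + 1)) (cfConvergent c (n + 2)) = cfGap c (n + 1) := by
  rw [dist_comm, Real.dist_eq, cfConvergent_add_two_sub hc, abs_mul, abs_pow, abs_neg, abs_one,
    one_pow, one_mul, abs_of_pos (cfGap_pos hc _)]

lemma cfGap_succ_le (hc : ∀ i, 0 < c i) (n : ℕ) : cfGap c (n + 1) ≤ cfGap c n / 2 := by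
  have hq₀ : (0 : ℝ) < cfDen c n := by exact_mod_cast cfDen_pos hc n
  have hq₁ : (0 : ℝ) < cfDen c (n + 1) := by exact_mod_cast cfDen_pos hc (n + 1)
  have h₂ : 2 * (cfDen c n : ℝ) ≤ cfDen c (n + 2) := by exact_mod_cast two_mul_cfDen_le hc n
  calc ((cfDen c (n + 1) : ℝ) * cfDen c (n + 2))⁻¹
        ≤ ((cfDen c (n + 1) : ℝ) * (2 * cfDen c n))⁻¹ := inv_anti₀ (by positivity) (by gcongr)
    _ = cfGap c n / 2 := by rw [cfGap]; ring

lemma cfGap_add_le (hc : ∀ i, 0 < c i) (n k : ℕ) : cfGap c (n + k) ≤ cfGap c n * (1 / 2) ^ k := by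
  induction k with
  | zero => simp
  | succ k ih =>
    calc cfGap c (n + k + 1) ≤ cfGap c (n + k) / 2 := cfGap_succ_le hc _
      _ ≤ cfGap c n * (1 / 2) ^ k / 2 := by gcongr
      _ = cfGap c n * (1 / 2) ^ (k + 1) := by ring

lemma dist_cfConvergent_le (hc : ∀ i, 0 < c i) (n k : ℕ) :
    dist (cfConvergent c (k + (n + 1))) (cfConvergent c (k + 1 + (n + 1)))
      ≤ cfGap c (n + 1) * (1 / 2) ^ k := by
  have hgap := cfGap_add_le hc (n + 1) k
  rw [add_comm] at hgap
  rw [show k + 1 + (n + 1) = k + n + 2 by ring]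
  exact (dist_cfConvergent hc (k + n)).trans_le hgap

lemma exists_tendsto_cfConvergent (hc : ∀ i, 0 < c i) :
    ∃ y, Tendsto (cfConvergent c) atTop (𝓝 y) := by
  obtain ⟨y, hy⟩ := cauchySeq_tendsto_of_complete <|
    cauchySeq_of_le_geometric _ _ (by norm_num) (dist_cfConvergent_le hc 0)
  exact ⟨y, (tendsto_add_atTop_iff_nat 1).mp hy⟩

lemma abs_sub_cfConvergent_le (hc : ∀ i, 0 < c i) {y : ℝ}
    (hy : Tendsto (cfConvergent c) atTop (𝓝 y)) (n : ℕ) :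
    |y - cfConvergent c (n + 1)| ≤ 2 * cfGap c (n + 1) := by
  have := dist_le_of_le_geometric_of_tendsto₀ (1 / 2) _ (by norm_num) (dist_cfConvergent_le hc n)
    ((tendsto_add_atTop_iff_nat (n + 1)).mpr hy)
  rw [zero_add] at this
  rw [abs_sub_comm, ← Real.dist_eq]
  exact this.trans_eq (by ring)

lemma cfGap_le (hc : ∀ i, 0 < c i) (n : ℕ) : cfGap c n ≤ φ / φ ^ (2 * n) := by
  have hq₀ : (0 : ℝ) < cfDen c n := by exact_mod_cast cfDen_pos hc n
  have hq₁ : (0 : ℝ) < cfDen c (n + 1) := by exact_mod_cast cfDen_pos hc (n + 1)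
  have h₀ := goldenRatio_pow_le_mul_cfDen hc n
  have h₁ := goldenRatio_pow_le_mul_cfDen hc (n + 1)
  have hφ := goldenRatio_pos
  rw [cfGap, inv_eq_one_div, div_le_div_iff₀ (by positivity) (by positivity), one_mul]
  refine le_of_mul_le_mul_right ?_ hφ
  calc φ ^ (2 * n) * φ = φ ^ n * φ ^ (n + 1) := by ring
    _ ≤ (φ * cfDen c n) * (φ * cfDen c (n + 1)) := by gcongr
    _ = φ * (cfDen c n * cfDen c (n + 1)) * φ := by ring

end Convergents

lemma one_div_le_abs_ratCast_sub_div (r : ℚ) {p q : ℕ} (hq : 0 < q) (hne : (r : ℝ) ≠ p / q) :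
    1 / (r.den * q : ℝ) ≤ |(r : ℝ) - p / q| := by
  have hd : (0 : ℝ) < r.den := by exact_mod_cast r.pos
  have hq' : (0 : ℝ) < q := by exact_mod_cast hq
  have hsub : (r : ℝ) - p / q = ((r.num * q - p * r.den : ℤ) : ℝ) / (r.den * q) := by
    rw [Rat.cast_def]
    push_cast
    field_simp
  have hN : r.num * q - p * r.den ≠ 0 := by
    contrapose! hne
    rw [← sub_eq_zero, hsub, hne, Int.cast_zero, zero_div]
  have hN' : (1 : ℝ) ≤ |((r.num * q - p * r.den : ℤ) : ℝ)| := by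
    exact_mod_cast Int.one_le_abs hN
  rw [hsub, abs_div, abs_of_pos (by positivity : (0 : ℝ) < r.den * q)]
  exact div_le_div_of_nonneg_right hN' (by positivity)

section Limit

variable {c : ℕ → ℕ}

lemma cfDen_le_two_mul_den_of_ne (hc : ∀ i, 0 < c i) {r : ℚ}
    (hr : Tendsto (cfConvergent c) atTop (𝓝 r)) {n : ℕ} (hne : (r : ℝ) ≠ cfConvergent c (n + 1)) :
    cfDen c (n + 2) ≤ 2 * r.den := by
  have hd : (0 : ℝ) < r.den := by exact_mod_cast r.pos
  have hq : (0 : ℝ) < cfDen c (n + 1) := by exact_mod_cast cfDen_pos hc (n + 1)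
  have hq' : (0 : ℝ) < cfDen c (n + 2) := by exact_mod_cast cfDen_pos hc (n + 2)
  have hlow := one_div_le_abs_ratCast_sub_div r (cfDen_pos hc (n + 1)) hne
  have hupp := abs_sub_cfConvergent_le hc hr n
  rw [cfGap, ← one_div, mul_one_div, cfConvergent] at hupp
  have := hlow.trans hupp
  rw [div_le_div_iff₀ (by positivity) (by positivity)] at this
  have : (cfDen c (n + 1) : ℝ) * cfDen c (n + 2) ≤ cfDen c (n + 1) * (2 * r.den) := by linarith
  exact_mod_cast le_of_mul_le_mul_left this hq

lemma irrational_of_tendsto_cfConvergent (hc : ∀ i, 0 < c i) {y : ℝ}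
    (hy : Tendsto (cfConvergent c) atTop (𝓝 y)) : Irrational y := by
  rintro ⟨r, rfl⟩
  have hbig (k : ℕ) : 2 * r.den < cfDen c (2 * r.den + 2 + k) :=
    (by omega : 2 * r.den < 2 * r.den + 2 + k).trans_le (le_cfDen hc _)
  by_cases h : (r : ℝ) = cfConvergent c (2 * r.den + 1)
  · have hne : (r : ℝ) ≠ cfConvergent c (2 * r.den + 1 + 1) := by
      rw [h]
      exact dist_pos.mp ((dist_cfConvergent hc _).symm ▸ cfGap_pos hc _)
    exact (hbig 1).not_ge (cfDen_le_two_mul_den_of_ne hc hy hne)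
  · exact (hbig 0).not_ge (cfDen_le_two_mul_den_of_ne hc hy h)

lemma mem_Ioo_of_tendsto_cfConvergent (hc : ∀ i, 0 < c i) {y : ℝ}
    (hy : Tendsto (cfConvergent c) atTop (𝓝 y)) : y ∈ Set.Ioo 0 1 := by
  have hIcc : y ∈ Set.Icc (0 : ℝ) 1 :=
    isClosed_Icc.mem_of_tendsto hy (Eventually.of_forall (cfConvergent_mem_Icc hc))
  have hirr := irrational_of_tendsto_cfConvergent hc hy
  exact ⟨hIcc.1.lt_of_ne hirr.ne_zero.symm, hIcc.2.lt_of_ne hirr.ne_one⟩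

lemma abs_sub_cfConvergent_le_goldenRatio (hc : ∀ i, 0 < c i) {y : ℝ}
    (hy : Tendsto (cfConvergent c) atTop (𝓝 y)) (n : ℕ) :
    |y - cfConvergent c (n + 1)| ≤ 2 * (φ / φ ^ (2 * (n + 1))) :=
  (abs_sub_cfConvergent_le hc hy n).trans (by gcongr; exact cfGap_le hc _)

lemma abs_sub_le_of_forall_lt_eq {b : ℕ → ℕ} (hb : ∀ i, 0 < b i) (hc : ∀ i, 0 < c i) {y z : ℝ}
    (hy : Tendsto (cfConvergent b) atTop (𝓝 y)) (hz : Tendsto (cfConvergent c) atTop (𝓝 z))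
    {t : ℕ} (ht : 0 < t) (hbc : ∀ i < t, b i = c i) : |y - z| ≤ 4 * φ / φ ^ (2 * t) := by
  obtain ⟨n, rfl⟩ : ∃ n, t = n + 1 := ⟨t - 1, by omega⟩
  have hyb := abs_sub_cfConvergent_le_goldenRatio hb hy n
  have hzc := abs_sub_cfConvergent_le_goldenRatio hc hz n
  rw [cfConvergent_congr hbc] at hyb
  calc |y - z| ≤ |y - cfConvergent c (n + 1)| + |cfConvergent c (n + 1) - z| := abs_sub_le ..
    _ ≤ 4 * φ / φ ^ (2 * (n + 1)) := by rw [abs_sub_comm _ z, mul_div_assoc]; linarith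

end Limit

noncomputable def minkowskiTerm (b : ℕ → ℕ) (k : ℕ) : ℝ :=
  (-1) ^ k * (2 : ℝ) ^ ((1 : ℤ) - (cfSum b (k + 1) : ℤ))

def prefixThen (a : ℕ → ℕ) (t d : ℕ) : ℕ → ℕ :=
  fun i => if i < t then a i else if i = t then d else 1

section PrefixThen

variable {a : ℕ → ℕ} {t d : ℕ}

lemma prefixThen_pos (ha : ∀ i, 0 < a i) (hd : 0 < d) (i : ℕ) : 0 < prefixThen a t d i := by
  unfold prefixThen
  split_ifs
  exacts [ha i, hd, Nat.one_pos]

lemma prefixThen_of_lt {i : ℕ} (hi : i < t) : prefixThen a t d i = a i := if_pos hi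

lemma prefixThen_self : prefixThen a t d t = d := by simp [prefixThen]

lemma prefixThen_of_gt {i : ℕ} (hi : t < i) : prefixThen a t d i = 1 := by
  simp [prefixThen, hi.not_gt, hi.ne']

lemma cfSum_prefixThen_of_le {k : ℕ} (hk : k ≤ t) : cfSum (prefixThen a t d) k = cfSum a k :=
  Finset.sum_congr rfl fun _ hi => prefixThen_of_lt ((Finset.mem_range.mp hi).trans_le hk)

lemma cfSum_prefixThen_add (k : ℕ) : cfSum (prefixThen a t d) (k + t + 1) = cfSum a t + d + k := by
  induction k with
  | zero =>
    rw [zero_add, cfSum, Finset.sum_range_succ, ← cfSum, cfSum_prefixThen_of_le le_rfl,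
      prefixThen_self, add_zero]
  | succ k ih =>
    rw [show k + 1 + t + 1 = k + t + 1 + 1 by ring, cfSum, Finset.sum_range_succ, ← cfSum, ih,
      prefixThen_of_gt (by omega), add_assoc]

lemma minkowskiTerm_prefixThen_add (k : ℕ) :
    minkowskiTerm (prefixThen a t d) (k + t)
      = (-1) ^ t * (2 : ℝ) ^ ((1 : ℤ) - (cfSum a t + d : ℕ)) * (-1 / 2) ^ k := by
  rw [minkowskiTerm, cfSum_prefixThen_add]
  push_cast
  rw [show (1 : ℤ) - (cfSum a t + d + k) = (1 - (cfSum a t + d)) + (-k : ℤ) by ring,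
    zpow_add₀ two_ne_zero, zpow_neg, zpow_natCast, div_pow, neg_pow]
  ring

lemma tsum_minkowskiTerm_prefixThen :
    ∑' k, minkowskiTerm (prefixThen a t d) k = ∑ i ∈ Finset.range t, minkowskiTerm a i
      + (-1) ^ t * (2 : ℝ) ^ ((1 : ℤ) - (cfSum a t + d : ℕ)) * (2 / 3) := by
  have htail : HasSum (fun k => minkowskiTerm (prefixThen a t d) (k + t))
      ((-1) ^ t * (2 : ℝ) ^ ((1 : ℤ) - (cfSum a t + d : ℕ)) * (2 / 3)) := by
    have hgeom := (hasSum_geometric_of_abs_lt_one (r := -1 / 2) (by norm_num [abs_div])).mul_left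
      ((-1) ^ t * (2 : ℝ) ^ ((1 : ℤ) - (cfSum a t + d : ℕ)))
    rw [show (1 - -1 / 2 : ℝ)⁻¹ = 2 / 3 by norm_num] at hgeom
    simpa only [minkowskiTerm_prefixThen_add] using hgeom
  have hhead : ∑ i ∈ Finset.range t, minkowskiTerm (prefixThen a t d) i
      = ∑ i ∈ Finset.range t, minkowskiTerm a i :=
    Finset.sum_congr rfl fun i hi => by
      rw [minkowskiTerm, minkowskiTerm, cfSum_prefixThen_of_le (Finset.mem_range.mp hi)]
  rw [← hhead]
  refine ((hasSum_nat_add_iff' t).mp ?_).tsum_eq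
  simpa using htail

lemma abs_tsum_minkowskiTerm_prefixThen_sub :
    |∑' k, minkowskiTerm (prefixThen a t 1) k - ∑' k, minkowskiTerm (prefixThen a t 2) k|
      = 1 / (3 * 2 ^ cfSum a t) := by
  rw [tsum_minkowskiTerm_prefixThen, tsum_minkowskiTerm_prefixThen]
  push_cast
  rw [show (1 : ℤ) - (cfSum a t + 2) = -(cfSum a t : ℤ) - 1 by ring,
    show (1 : ℤ) - (cfSum a t + 1) = -(cfSum a t : ℤ) by ring, zpow_sub_one₀ two_ne_zero,
    zpow_neg, zpow_natCast]
  rw [add_sub_add_left_eq_sub, show (-1 : ℝ) ^ t * (2 ^ cfSum a t)⁻¹ * (2 / 3)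
      - (-1) ^ t * ((2 ^ cfSum a t)⁻¹ * 2⁻¹) * (2 / 3)
      = (-1) ^ t * (1 / (3 * 2 ^ cfSum a t)) by ring,
    abs_mul, abs_pow, abs_neg, abs_one, one_pow, one_mul, abs_of_pos (by positivity)]

end PrefixThen

lemma IsMinkowski.eq_tsum_minkowskiTerm {Q : ℝ → ℝ} (hQ : IsMinkowski Q) {b : ℕ → ℕ}
    (hb : ∀ i, 0 < b i) {y : ℝ} (hy : Tendsto (cfConvergent b) atTop (𝓝 y)) :
    Q y = ∑' k, minkowskiTerm b k :=
  hQ.2.2.2.2 y (mem_Ioo_of_tendsto_cfConvergent hb hy) (irrational_of_tendsto_cfConvergent hb hy) b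
    ⟨hb, hy⟩

lemma IsMinkowski.exists_abs_sub_eq {Q : ℝ → ℝ} (hQ : IsMinkowski Q) {a : ℕ → ℕ}
    (ha : ∀ i, 0 < a i) {x : ℝ} (hx : Tendsto (cfConvergent a) atTop (𝓝 x)) {t : ℕ} (ht : 0 < t) :
    ∃ u v, |u - x| ≤ 4 * φ / φ ^ (2 * t) ∧ |v - x| ≤ 4 * φ / φ ^ (2 * t) ∧
      |Q v - Q u| = 1 / (3 * 2 ^ cfSum a t) := by
  have hu_pos := prefixThen_pos (t := t) ha two_pos
  have hv_pos := prefixThen_pos (t := t) ha one_pos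
  obtain ⟨u, hu⟩ := exists_tendsto_cfConvergent hu_pos
  obtain ⟨v, hv⟩ := exists_tendsto_cfConvergent hv_pos
  refine ⟨u, v, abs_sub_le_of_forall_lt_eq hu_pos ha hu hx ht fun _ => prefixThen_of_lt,
    abs_sub_le_of_forall_lt_eq hv_pos ha hv hx ht fun _ => prefixThen_of_lt, ?_⟩
  rw [hQ.eq_tsum_minkowskiTerm hu_pos hu, hQ.eq_tsum_minkowskiTerm hv_pos hv]
  exact abs_tsum_minkowskiTerm_prefixThen_sub

lemma kappa1_mul_lt_of_pow_lt {t s : ℕ} (h : φ ^ (2 * t) < 2 ^ s) : kappa1 * t < s := by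
  have hlog := Real.log_lt_log (by positivity) h
  rw [Real.log_pow, Real.log_pow] at hlog
  push_cast at hlog
  rw [kappa1, div_mul_eq_mul_div, div_lt_iff₀ (Real.log_pos one_lt_two)]
  exact hlog.trans_eq' (by rw [Phi]; ring)

theorem stmt6_general (x : ℝ)
    (a : ℕ → ℕ) (ha : IsCFOf x a)
    (Q : ℝ → ℝ) (hQ : IsMinkowski Q) (hder : HasDerivAt Q 0 x) :
    ∃ T : ℕ, ∀ t : ℕ, T < t → (cfSum a t : ℝ) - kappa1 * t > 0 := by
  obtain ⟨hapos, hax⟩ := ha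
  have hflat : ∀ᶠ y in 𝓝 x, |Q y - Q x| ≤ 1 / 48 * |y - x| := by
    simpa using (hasDerivAt_iff_isLittleO.mp hder).bound (by norm_num : (0 : ℝ) < 1 / 48)
  obtain ⟨δ, hδ, hball⟩ := Metric.eventually_nhds_iff.mp hflat
  obtain ⟨T, hT⟩ := pow_unbounded_of_one_lt (4 * φ / δ) one_lt_goldenRatio
  refine ⟨T, fun t ht => sub_pos.mpr (kappa1_mul_lt_of_pow_lt ?_)⟩
  obtain ⟨u, v, hu, hv, huv⟩ := hQ.exists_abs_sub_eq hapos hax (by omega : 0 < t)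
  set B := 4 * φ / φ ^ (2 * t)
  have hBδ : B < δ := (div_lt_comm₀ (by positivity) hδ).mpr
    (hT.trans_le (pow_le_pow_right₀ one_lt_goldenRatio.le (by omega)))
  have hQu : |Q u - Q x| ≤ 1 / 48 * |u - x| := hball (by rw [Real.dist_eq]; linarith)
  have hQv : |Q v - Q x| ≤ 1 / 48 * |v - x| := hball (by rw [Real.dist_eq]; linarith)
  have hgap : 1 / (3 * 2 ^ cfSum a t) ≤ φ / 2 * (1 / (3 * φ ^ (2 * t))) :=
    calc 1 / (3 * 2 ^ cfSum a t) = |(Q v - Q x) - (Q u - Q x)| := by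
          rw [← huv, sub_sub_sub_cancel_right]
      _ ≤ 1 / 48 * (2 * B) := by linarith [abs_sub (Q v - Q x) (Q u - Q x)]
      _ = φ / 2 * (1 / (3 * φ ^ (2 * t))) := by ring
  -- the choice `1 / 48` leaves the factor `φ / 2 < 1`
  have := hgap.trans_lt (mul_lt_of_lt_one_left (by positivity) (by linarith [goldenRatio_lt_two]))
  rwa [one_div_lt_one_div (by positivity) (by positivity), mul_lt_mul_iff_right₀ three_pos] at this

/-- If `?'(x)` exists and equals `0`, then `S_x(t) - κ₁ t > 0` for all `t` large enough. -/
theorem stmt6 (x : ℝ) (hx : x ∈ Set.Ioo (0:ℝ) 1) (hirr : Irrational x)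
    (a : ℕ → ℕ) (ha : IsCFOf x a)
    (Q : ℝ → ℝ) (hQ : IsMinkowski Q) (hder : HasDerivAt Q 0 x) :
    ∃ T : ℕ, ∀ t : ℕ, T < t → (cfSum a t : ℝ) - kappa1 * t > 0 :=
  stmt6_general x a ha Q hQ hder
end

section
/- Let α, β, s be real numbers with β > α ≥ 3 and s ≥ β. Then for every finite sequence (r_1,…,r_k) of real numbers with α ≤ r_i ≤ β for all i and r_1 + ⋯ + r_k = s, one has r_1·r_2·⋯·r_k ≥ β^{⌊s/β⌋}. -/
/-!
Since `log x / x` decreases on `[e, ∞)`, every `x ∈ [e, β]` satisfies `β ^ (x / β) ≤ x`.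
Multiplying over the list gives `β ^ (s / β) ≤ r₁ ⋯ rₖ`, and `β ^ ⌊s / β⌋ ≤ β ^ (s / β)` as `β ≥ 1`.
-/

open Real

lemma Real.rpow_div_le_of_exp_one_le {x β : ℝ} (hx : exp 1 ≤ x) (hxβ : x ≤ β) :
    β ^ (x / β) ≤ x := by
  have hx₀ : 0 < x := (exp_pos 1).trans_le hx
  have hβ₀ : 0 < β := hx₀.trans_le hxβ
  have hlog : log β / β ≤ log x / x := log_div_self_antitoneOn hx (hx.trans hxβ) hxβ
  rw [rpow_le_iff_le_log hβ₀ hx₀]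
  calc x / β * log β = x * (log β / β) := by ring
    _ ≤ x * (log x / x) := by gcongr
    _ = log x := by field_simp

lemma Real.rpow_sum_div_le_prod {β : ℝ} (r : List ℝ) (hr : ∀ y ∈ r, exp 1 ≤ y ∧ y ≤ β) :
    β ^ (r.sum / β) ≤ r.prod := by
  induction r with
  | nil => simp
  | cons x t ih =>
    obtain ⟨hex, hxβ⟩ := hr x List.mem_cons_self
    have hβ₀ : 0 < β := (exp_pos 1).trans_le (hex.trans hxβ)
    rw [List.sum_cons, List.prod_cons, add_div, rpow_add hβ₀]
    exact mul_le_mul (rpow_div_le_of_exp_one_le hex hxβ)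
      (ih fun y hy => hr y (List.mem_cons_of_mem x hy)) (by positivity)
      ((exp_pos 1).le.trans hex)

theorem stmt7_general (α β s : ℝ) (hβα : β > α) (hα : α ≥ 3)
    (r : List ℝ) (hr : ∀ y ∈ r, α ≤ y ∧ y ≤ β) (hsum : r.sum = s) :
    r.prod ≥ β ^ ⌊s / β⌋ := by
  have he : exp 1 ≤ α := exp_one_lt_three.le.trans hα
  calc β ^ ⌊s / β⌋ = β ^ (⌊s / β⌋ : ℝ) := (rpow_intCast β _).symm
    _ ≤ β ^ (s / β) := rpow_le_rpow_of_exponent_le (by linarith) (Int.floor_le _)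
    _ ≤ r.prod := hsum ▸ rpow_sum_div_le_prod r fun y hy => ⟨he.trans (hr y hy).1, (hr y hy).2⟩

/-- If `β > α ≥ 3`, `s ≥ β`, and `r_1,…,r_k ∈ [α,β]` with `r_1 + ⋯ + r_k = s`, then
`r_1 ⋯ r_k ≥ β^⌊s/β⌋`. -/
theorem stmt7 (α β s : ℝ) (hβα : β > α) (hα : α ≥ 3) (hs : s ≥ β)
    (r : List ℝ) (hr : ∀ y ∈ r, α ≤ y ∧ y ≤ β) (hsum : r.sum = s) :
    r.prod ≥ β ^ ⌊s / β⌋ :=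
  stmt7_general α β s hβα hα r hr hsum
end

section
/- Let A and C be (possibly empty) finite sequences of positive integers, let B be a finite sequence of positive integers that is symmetric (equal to its reverse), and let p ≥ m ≥ 1 be integers. Then ⟨A, 1, B, p+m−1, C⟩ ≤ ⟨A, m, B, p, C⟩, where commas denote concatenation of sequences and single elements. -/
open Matrix

def contMatrix (a : ℕ) : Matrix (Fin 2) (Fin 2) ℕ := !![a, 1; 1, 0]

def contProd (l : List ℕ) : Matrix (Fin 2) (Fin 2) ℕ := (l.map contMatrix).prod

@[simp]
lemma contProd_nil : contProd [] = 1 := rfl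

@[simp]
lemma contProd_cons (a : ℕ) (l : List ℕ) : contProd (a :: l) = contMatrix a * contProd l := by
  simp [contProd]

@[simp]
lemma contProd_append (l₁ l₂ : List ℕ) : contProd (l₁ ++ l₂) = contProd l₁ * contProd l₂ := by
  simp [contProd]

lemma contMatrix_transpose (a : ℕ) : (contMatrix a)ᵀ = contMatrix a := by
  ext i j; fin_cases i <;> fin_cases j <;> rfl

lemma contProd_reverse (l : List ℕ) : contProd l.reverse = (contProd l)ᵀ := by
  induction l with
  | nil => simp
  | cons a l ih =>
    rw [List.reverse_cons, contProd_append, ih, contProd_cons a l, transpose_mul,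
      contMatrix_transpose]
    simp

lemma contAux_eq_contProd (l : List ℕ) : contAux l = contProd l 0 0 := by
  induction l using contAux.induct with
  | case1 => rfl
  | case2 a => simp [contAux, contMatrix]
  | case3 a b l ih₁ ih₂ =>
    simp [contAux, ih₁, ih₂, mul_apply, Fin.sum_univ_two, contMatrix, vecMul, dotProduct]

lemma cont_eq_contProd (l : List ℕ) : cont l = contProd l 0 0 := by
  rw [cont, contAux_eq_contProd, contProd_reverse, transpose_apply]

lemma contProd_zero_one_eq_one_zero {l : List ℕ} (hl : l.reverse = l) :
    contProd l 0 1 = contProd l 1 0 := by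
  conv_lhs => rw [← hl, contProd_reverse, transpose_apply]

lemma contProd_zero_one_le {l : List ℕ} (hl : ∀ a ∈ l, 0 < a) :
    contProd l 0 1 ≤ contProd l 0 0 := by
  rcases l.eq_nil_or_concat with rfl | ⟨l', a, rfl⟩
  · simp
  · rw [List.concat_eq_append] at hl ⊢
    have ha : 0 < a := hl a (by simp)
    simp only [contProd_append, contProd_cons, contProd_nil, contMatrix, mul_one, mul_apply,
      of_apply, cons_val', cons_val_zero, cons_val_one, cons_val_fin_one, Fin.sum_univ_two,
      mul_zero, add_zero]
    exact Nat.le_add_right_of_le (Nat.le_mul_of_pos_right _ ha)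

lemma sandwich_apply_zero_zero (X N Y : Matrix (Fin 2) (Fin 2) ℕ) (x y : ℕ) :
    (X * (contMatrix x * (N * (contMatrix y * Y)))) 0 0 =
      x * y * (X 0 0 * N 0 0 * Y 0 0)
      + x * (X 0 0 * (N 0 0 * Y 1 0 + N 0 1 * Y 0 0))
      + y * ((X 0 1 * N 0 0 + X 0 0 * N 1 0) * Y 0 0)
      + (X 0 1 * (N 0 0 * Y 1 0 + N 0 1 * Y 0 0) + X 0 0 * (N 1 0 * Y 1 0 + N 1 1 * Y 0 0)) := by
  simp only [contMatrix, cons_mul, empty_mul, Equiv.symm_apply_apply, mul_apply, of_apply,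
    cons_val', vecMul, dotProduct, Fin.sum_univ_two, cons_val_zero, cons_val_one, cons_val_fin_one,
    one_mul, zero_mul, add_zero]
  ring

lemma sandwich_le {X N Y : Matrix (Fin 2) (Fin 2) ℕ} (hX : X 0 1 ≤ X 0 0)
    (hN : N 0 1 = N 1 0) {k p : ℕ} (hkp : k < p) :
    (X * (contMatrix 1 * (N * (contMatrix (p + k) * Y)))) 0 0 ≤
      (X * (contMatrix (k + 1) * (N * (contMatrix p * Y)))) 0 0 := by
  have hkey : k * (X 0 1 + X 0 0) ≤ k * (X 0 0 * p) := by
    rcases Nat.eq_zero_or_pos k with rfl | hk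
    · simp
    · gcongr
      calc X 0 1 + X 0 0 ≤ X 0 0 * 2 := by omega
        _ ≤ X 0 0 * p := by gcongr; omega
  rw [sandwich_apply_zero_zero, sandwich_apply_zero_zero, hN]
  linarith [Nat.mul_le_mul_right (N 0 0 * Y 0 0) hkey,
    Nat.zero_le (k * (X 0 0 * (N 0 0 * Y 1 0)))]

theorem stmt8_general (A B C : List ℕ)
    (hA : ∀ b ∈ A, 0 < b)
    (hsym : B.reverse = B) (p m : ℕ) (hm : 1 ≤ m) (hpm : m ≤ p) :
    cont (A ++ 1 :: (B ++ (p + m - 1) :: C)) ≤ cont (A ++ m :: (B ++ p :: C)) := by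
  obtain ⟨k, rfl⟩ : ∃ k, m = k + 1 := ⟨m - 1, by omega⟩
  rw [show p + (k + 1) - 1 = p + k by omega]
  simp only [cont_eq_contProd, contProd_append, contProd_cons]
  exact sandwich_le (contProd_zero_one_le hA) (contProd_zero_one_eq_one_zero hsym) (by omega)

/-- If `B` is a symmetric sequence and `p ≥ m ≥ 1`, then
`⟨A, 1, B, p+m-1, C⟩ ≤ ⟨A, m, B, p, C⟩`. -/
theorem stmt8 (A B C : List ℕ)
    (hA : ∀ b ∈ A, 0 < b) (hB : ∀ b ∈ B, 0 < b) (hC : ∀ b ∈ C, 0 < b)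
    (hsym : B.reverse = B) (p m : ℕ) (hm : 1 ≤ m) (hpm : m ≤ p) :
    cont (A ++ 1 :: (B ++ (p + m - 1) :: C)) ≤ cont (A ++ m :: (B ++ p :: C)) :=
  stmt8_general A B C hA hsym p m hm hpm
end

section
/- Let x = [0;a_1,a_2,…] ∈ (0,1) be irrational such that the derivative ?'(x) of the Minkowski question-mark function exists at x and equals 0, and suppose every partial quotient a_i is either equal to 1 or greater than 11. Then there exists T ∈ ℕ such that for all t > T one has S_x(t) − κ₁·t > 3·w(A_t), where w(A_t) is the number of indices i ≤ t with a_i > 1. -/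
open Filter Topology

/-!
Let `q_t` be the denominator of the `t`-th convergent of `x`. Raising the partial quotient
`a_{t+1}` by `2` gives a point `y_t` with `|x - y_t| ≤ 4 / q_t ^ 2`, while the Denjoy–Salem series
shows `|?(x) - ?(y_t)| ≥ 2 ^ -(S_x(t+1) + 1)`. Since `?'(x) = 0`, this forces
`2 ^ 8 q_t ^ 2 ≤ 2 ^ S_x(t+1)` for large `t`. On the other hand `q_{t+1} + q_t / φ` grows by the
factor `φ` at every partial quotient `1` and by at least `a / φ ≥ 12 / φ` at every other one, so
`q_t ≥ φ ^ (t-1) (12 / φ²) ^ w(A_t)`. Taking logarithms and using `12 / φ² > 2 ^ (3/2)` gives the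
claim.
-/

namespace CF

def den (b : ℕ → ℕ) (t : ℕ) : ℕ := cont ((List.range t).map b)

/-- `num b 0 = 1`, so `convergent b 0 = 1` instead of `0`: statements about convergents start
at `t = 1`. -/
def num (b : ℕ → ℕ) (t : ℕ) : ℕ := cont ((List.range t).map b).tail

noncomputable def convergent (b : ℕ → ℕ) (t : ℕ) : ℝ := num b t / den b t

section Continuants

variable (b : ℕ → ℕ)

lemma den_zero : den b 0 = 1 := rfl

lemma den_one : den b 1 = b 0 := rfl

lemma den_add_two (t : ℕ) : den b (t + 2) = b (t + 1) * den b (t + 1) + den b t := by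
  simp only [den, cont, List.range_succ, List.map_append, List.map_singleton,
    List.reverse_append, List.reverse_cons, List.reverse_nil, List.nil_append,
    List.cons_append]
  rfl

lemma num_succ (t : ℕ) : num b (t + 1) = den (fun i => b (i + 1)) t := by
  simp only [num, den, List.range_succ_eq_map, List.map_cons, List.map_map, List.tail_cons]
  rfl

lemma num_mul_den_sub (t : ℕ) :
    (num b (t + 2) * den b (t + 1) : ℤ) - num b (t + 1) * den b (t + 2) = (-1) ^ (t + 1) := by
  simp only [num_succ]
  induction t with
  | zero => simp [den_add_two, den_one, den_zero]
  | succ t ih =>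
    rw [den_add_two _ t, den_add_two b (t + 1)]
    push_cast
    linear_combination (-1 : ℤ) * ih

lemma den_congr {a : ℕ → ℕ} {t : ℕ} (h : ∀ i < t, a i = b i) : den a t = den b t := by
  rw [den, den, List.map_congr_left fun i hi => h i (List.mem_range.mp hi)]

lemma convergent_congr {a : ℕ → ℕ} {t : ℕ} (h : ∀ i < t, a i = b i) :
    convergent a t = convergent b t := by
  rw [convergent, convergent, num, num, den_congr b h,
    List.map_congr_left fun i hi => h i (List.mem_range.mp hi)]

variable {b} (hb : ∀ i, 0 < b i)
include hb

lemma den_pos : ∀ t, 0 < den b t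
  | 0 => Nat.one_pos
  | 1 => hb 0
  | t + 2 => by rw [den_add_two]; have := den_pos t; positivity

lemma den_add_le (t : ℕ) : den b (t + 1) + den b t ≤ den b (t + 2) := by
  rw [den_add_two]
  have := Nat.le_mul_of_pos_left (den b (t + 1)) (hb (t + 1))
  omega

lemma den_monotone : Monotone (den b) := by
  refine monotone_nat_of_le_succ fun t => ?_
  cases t with
  | zero => exact hb 0
  | succ t => have := den_add_le hb t; show den b (t + 1) ≤ den b (t + 2); omega

lemma le_den : ∀ t, t ≤ den b t
  | 0 => Nat.zero_le _
  | 1 => hb 0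
  | t + 2 => by
    have := den_add_le hb t
    have : t + 1 ≤ den b (t + 1) := le_den (t + 1)
    have := den_pos hb t
    omega

lemma two_pow_mul_den_mul_den_le (s k : ℕ) :
    2 ^ k * (den b s * den b (s + 1)) ≤ den b (k + s) * den b (k + s + 1) := by
  induction k with
  | zero => simp
  | succ k ih =>
    have h2 : 2 * den b (k + s) ≤ den b (k + s + 2) := by
      have := den_add_le hb (k + s)
      have : den b (k + s) ≤ den b (k + s + 1) := den_monotone hb (Nat.le_succ _)
      omega
    calc 2 ^ (k + 1) * (den b s * den b (s + 1))
        = 2 * (2 ^ k * (den b s * den b (s + 1))) := by ring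
      _ ≤ 2 * (den b (k + s) * den b (k + s + 1)) := Nat.mul_le_mul_left _ ih
      _ = den b (k + s + 1) * (2 * den b (k + s)) := by ring
      _ ≤ den b (k + s + 1) * den b (k + s + 2) := Nat.mul_le_mul_left _ h2
      _ = den b (k + 1 + s) * den b (k + 1 + s + 1) := by rw [add_right_comm k 1 s]

end Continuants

noncomputable def value (b : ℕ → ℕ) : ℝ := limUnder atTop (convergent b)

section Value

variable {b : ℕ → ℕ} (hb : ∀ i, 0 < b i)
include hb

lemma abs_convergent_succ_sub {t : ℕ} (ht : 1 ≤ t) :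
    |convergent b (t + 1) - convergent b t| = 1 / (den b t * den b (t + 1)) := by
  obtain ⟨m, rfl⟩ : ∃ m, t = m + 1 := ⟨t - 1, by omega⟩
  have h1 : (den b (m + 1) : ℝ) ≠ 0 := by exact_mod_cast (den_pos hb _).ne'
  have h2 : (den b (m + 2) : ℝ) ≠ 0 := by exact_mod_cast (den_pos hb _).ne'
  have hdet : (num b (m + 2) * den b (m + 1) - num b (m + 1) * den b (m + 2) : ℝ)
      = (-1) ^ (m + 1) := by exact_mod_cast num_mul_den_sub b m
  have hdiff : convergent b (m + 1 + 1) - convergent b (m + 1)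
      = (-1) ^ (m + 1) / (den b (m + 1) * den b (m + 1 + 1)) := by
    rw [← hdet, convergent, convergent]
    field_simp
  rw [hdiff, abs_div, abs_pow, abs_neg, abs_one, one_pow, abs_of_pos (by positivity)]

lemma convergent_succ_ne {t : ℕ} (ht : 1 ≤ t) : convergent b (t + 1) ≠ convergent b t := by
  intro h
  have habs := abs_convergent_succ_sub hb ht
  rw [h, sub_self, abs_zero] at habs
  have := den_pos hb t
  have := den_pos hb (t + 1)
  have : (0 : ℝ) < 1 / (den b t * den b (t + 1)) := by positivity
  linarith

lemma dist_convergent_le {s : ℕ} (hs : 1 ≤ s) (k : ℕ) :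
    dist (convergent b (k + s)) (convergent b (k + 1 + s))
      ≤ ((den b s : ℝ) ^ 2)⁻¹ * (1 / 2) ^ k := by
  have hgrowth : (2 ^ k * den b s ^ 2 : ℝ) ≤ den b (k + s) * den b (k + s + 1) := by
    have := den_monotone hb (Nat.le_succ s)
    have := two_pow_mul_den_mul_den_le hb s k
    have : 2 ^ k * den b s ^ 2 ≤ den b (k + s) * den b (k + s + 1) := by
      calc 2 ^ k * den b s ^ 2 = 2 ^ k * (den b s * den b s) := by ring
        _ ≤ 2 ^ k * (den b s * den b (s + 1)) := by gcongr
        _ ≤ _ := this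
    exact_mod_cast this
  have := den_pos hb s
  rw [add_right_comm, dist_comm, Real.dist_eq, abs_convergent_succ_sub hb (by omega),
    show ((den b s : ℝ) ^ 2)⁻¹ * (1 / 2) ^ k = 1 / (2 ^ k * den b s ^ 2) by
      rw [one_div_pow, one_div, one_div, ← mul_inv, mul_comm (2 ^ k : ℝ)]]
  exact one_div_le_one_div_of_le (by positivity) hgrowth

lemma tendsto_convergent : Tendsto (convergent b) atTop (𝓝 (value b)) :=
  ((cauchySeq_shift 1).mp
    (cauchySeq_of_le_geometric _ _ (by norm_num) (dist_convergent_le hb le_rfl))).tendsto_limUnder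

lemma abs_value_sub_convergent_le {s : ℕ} (hs : 1 ≤ s) :
    |value b - convergent b s| ≤ 2 / (den b s : ℝ) ^ 2 := by
  have h := dist_le_of_le_geometric_of_tendsto₀ (1 / 2) _ (by norm_num)
    (dist_convergent_le hb hs) ((tendsto_add_atTop_iff_nat s).mpr (tendsto_convergent hb))
  rw [zero_add, dist_comm, Real.dist_eq] at h
  convert h using 1
  ring

lemma one_div_le_abs_rat_sub_convergent (r : ℚ) (t : ℕ) (hne : (r : ℝ) ≠ convergent b t) :
    1 / (r.den * den b t : ℝ) ≤ |r - convergent b t| := by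
  have hq : (0 : ℝ) < r.den * den b t := by have := den_pos hb t; positivity
  have key : (r : ℝ) - convergent b t
      = ((r.num * den b t - num b t * r.den : ℤ) : ℝ) / (r.den * den b t) := by
    have : (den b t : ℝ) ≠ 0 := by exact_mod_cast (den_pos hb t).ne'
    rw [convergent, Rat.cast_def, div_sub_div _ _ (by positivity) this]
    push_cast
    ring
  have hz : r.num * den b t - num b t * r.den ≠ 0 := by
    rintro hz
    rw [hz, Int.cast_zero, zero_div, sub_eq_zero] at key
    exact hne key
  rw [key, abs_div, abs_of_pos hq]
  gcongr
  rw [← Int.cast_abs]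
  exact_mod_cast Int.one_le_abs hz

lemma den_le_of_value_eq_rat {r : ℚ} (hr : (r : ℝ) = value b) {s : ℕ} (hs : 1 ≤ s)
    (hne : (r : ℝ) ≠ convergent b s) : den b s ≤ 2 * r.den := by
  have h := (one_div_le_abs_rat_sub_convergent hb r s hne).trans
    (hr ▸ abs_value_sub_convergent_le hb hs)
  have hq : (0 : ℝ) < den b s := by exact_mod_cast den_pos hb s
  have hd : (0 : ℝ) < r.den := by exact_mod_cast r.pos
  rw [div_le_div_iff₀ (by positivity) (by positivity)] at h
  have : (den b s : ℝ) ≤ 2 * r.den := le_of_mul_le_mul_right (by linarith) hq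
  exact_mod_cast this

lemma irrational_value : Irrational (value b) := by
  rintro ⟨r, hr⟩
  have hbig : ∀ t, 2 * r.den + 1 ≤ t → 2 * r.den < den b t := fun t ht =>
    lt_of_lt_of_le ht (le_den hb t)
  by_cases hne : (r : ℝ) = convergent b (2 * r.den + 1)
  · have hne' : (r : ℝ) ≠ convergent b (2 * r.den + 1 + 1) := fun h =>
      convergent_succ_ne hb (Nat.le_add_left 1 _) (h.symm.trans hne)
    have hle := den_le_of_value_eq_rat hb hr (by omega) hne'
    have hlt := hbig (2 * r.den + 1 + 1) (by omega)
    omega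
  · have hle := den_le_of_value_eq_rat hb hr (by omega) hne
    have hlt := hbig _ le_rfl
    omega

end Value

lemma eq_value_of_isCFOf {x : ℝ} {b : ℕ → ℕ} (h : IsCFOf x b) : x = value b :=
  tendsto_nhds_unique h.2 (tendsto_convergent h.1)

lemma abs_value_sub_value_le {a b : ℕ → ℕ} (ha : ∀ i, 0 < a i) (hb : ∀ i, 0 < b i) {t : ℕ}
    (ht : 1 ≤ t) (hagree : ∀ i < t, a i = b i) :
    |value a - value b| ≤ 4 / (den a t : ℝ) ^ 2 := by
  have hb' := abs_value_sub_convergent_le hb ht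
  rw [← den_congr b hagree, ← convergent_congr b hagree] at hb'
  calc |value a - value b| = |(value a - convergent a t) - (value b - convergent a t)| := by
        rw [sub_sub_sub_cancel_right]
    _ ≤ |value a - convergent a t| + |value b - convergent a t| := abs_sub _ _
    _ ≤ 2 / (den a t : ℝ) ^ 2 + 2 / (den a t : ℝ) ^ 2 :=
        add_le_add (abs_value_sub_convergent_le ha ht) hb'
    _ = 4 / (den a t : ℝ) ^ 2 := by ring

lemma tendsto_value {a : ℕ → ℕ} {b : ℕ → ℕ → ℕ} (ha : ∀ i, 0 < a i) (hb : ∀ t i, 0 < b t i)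
    (hagree : ∀ t, ∀ i < t, a i = b t i) :
    Tendsto (fun t => value (b t)) atTop (𝓝 (value a)) := by
  have hden : Tendsto (fun t => (den a t : ℝ) ^ 2) atTop atTop :=
    (tendsto_pow_atTop two_ne_zero).comp
      (tendsto_atTop_mono (fun t => by exact_mod_cast le_den ha t) tendsto_natCast_atTop_atTop)
  refine tendsto_iff_dist_tendsto_zero.mpr
    (squeeze_zero' (Eventually.of_forall fun t => dist_nonneg) ?_
      (tendsto_const_nhds (x := (4 : ℝ)).div_atTop hden))
  filter_upwards [eventually_ge_atTop 1] with t ht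
  rw [Real.dist_eq, abs_sub_comm]
  exact abs_value_sub_value_le ha (hb t) ht (hagree t)

lemma isCFOf_value {b : ℕ → ℕ} (hb : ∀ i, 0 < b i) : IsCFOf (value b) b :=
  ⟨hb, tendsto_convergent hb⟩

lemma one_lt_phi : 1 < Phi := Real.one_lt_goldenRatio

lemma phi_pos : 0 < Phi := Real.goldenRatio_pos

lemma phi_lt_two : Phi < 2 := Real.goldenRatio_lt_two

lemma one_add_inv_phi : 1 + Phi⁻¹ = Phi := by
  rw [Phi, ← Real.goldenRatio, Real.inv_goldenRatio, ← Real.one_sub_goldenConj]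
  ring

/-- `q_{t+1} + q_t / φ`: it is multiplied by `φ` at a partial quotient `1` (as `1 + φ⁻¹ = φ`) and
by at least `B / φ` at a partial quotient `≥ B`. -/
noncomputable def goldenDen (b : ℕ → ℕ) (t : ℕ) : ℝ := den b (t + 1) + den b t / Phi

section GoldenDen

variable {b : ℕ → ℕ} (hb : ∀ i, 0 < b i)

lemma phi_mul_goldenDen {t : ℕ} (h : b (t + 1) = 1) :
    Phi * goldenDen b t = goldenDen b (t + 1) := by
  have hrec : (den b (t + 2) : ℝ) = den b (t + 1) + den b t := by
    exact_mod_cast (den_add_two b t).trans (by rw [h, one_mul])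
  have hφ := phi_pos.ne'
  rw [goldenDen, goldenDen, hrec, div_eq_mul_inv, div_eq_mul_inv]
  linear_combination (den b (t + 1) : ℝ) * one_add_inv_phi.symm + (den b t : ℝ) * mul_inv_cancel₀ hφ

include hb

lemma goldenDen_le (t : ℕ) : goldenDen b t ≤ Phi * den b (t + 1) := by
  have hφ := phi_pos
  have hmono : (den b t : ℝ) ≤ den b (t + 1) := by exact_mod_cast den_monotone hb (Nat.le_succ t)
  have : (den b t : ℝ) / Phi ≤ den b (t + 1) / Phi := by gcongr
  calc goldenDen b t ≤ den b (t + 1) + den b (t + 1) / Phi := by rw [goldenDen]; linarith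
    _ = Phi * den b (t + 1) := by
      rw [div_eq_mul_inv, ← mul_one_add, one_add_inv_phi, mul_comm]

lemma div_phi_mul_goldenDen_le {B : ℝ} (hB : 0 ≤ B) {t : ℕ} (hBt : B ≤ b (t + 1)) :
    B / Phi * goldenDen b t ≤ goldenDen b (t + 1) := by
  have hφ := phi_pos
  have hrec : (den b (t + 2) : ℝ) = b (t + 1) * den b (t + 1) + den b t := by
    exact_mod_cast den_add_two b t
  calc B / Phi * goldenDen b t ≤ B / Phi * (Phi * den b (t + 1)) :=
        mul_le_mul_of_nonneg_left (goldenDen_le hb t) (by positivity)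
    _ = B * den b (t + 1) := by field_simp
    _ ≤ b (t + 1) * den b (t + 1) := by gcongr
    _ ≤ goldenDen b (t + 1) := by
      rw [goldenDen, hrec]
      have : (0 : ℝ) ≤ den b (t + 1) / Phi := by positivity
      linarith [(Nat.cast_nonneg (den b t) : (0 : ℝ) ≤ den b t)]

lemma pow_mul_pow_count_le_den {B : ℝ} (hB : 0 ≤ B) (hsize : ∀ i, b i = 1 ∨ B ≤ b i) (t : ℕ) :
    Phi ^ t * (B / Phi ^ 2) ^ Nat.count (fun i => 1 < b i) t ≤ Phi * den b t := by
  have hφ := phi_pos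
  have hgolden : ∀ s, Phi ^ (s + 1) * (B / Phi ^ 2) ^ Nat.count (fun i => 1 < b i) (s + 1)
      ≤ goldenDen b s := by
    intro s
    induction s with
    | zero =>
      rw [Nat.count_succ, Nat.count_zero, goldenDen, den_one, den_zero]
      rcases eq_or_ne (b 0) 1 with h1 | h1
      · rw [if_neg (by omega), h1, add_zero, pow_zero, mul_one, pow_one, Nat.cast_one, one_div,
          one_add_inv_phi]
      · have hB0 : B ≤ b 0 := (hsize 0).resolve_left h1
        have h10 : 1 < b 0 := by have := hb 0; omega
        have : B / Phi ≤ B := div_le_self hB one_lt_phi.le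
        have : (0 : ℝ) ≤ 1 / Phi := by positivity
        rw [if_pos h10, zero_add, pow_one, pow_one, Nat.cast_one]
        calc Phi * (B / Phi ^ 2) = B / Phi := by field_simp
          _ ≤ b 0 + 1 / Phi := by linarith
    | succ s ih =>
      rw [Nat.count_succ]
      rcases eq_or_ne (b (s + 1)) 1 with h1 | h1
      · rw [← phi_mul_goldenDen h1, if_neg (by omega), add_zero, pow_succ', mul_assoc]
        gcongr
      · have : 1 < b (s + 1) := by have := hb (s + 1); omega
        rw [if_pos this]
        calc Phi ^ (s + 1 + 1) * (B / Phi ^ 2) ^ (Nat.count (fun i => 1 < b i) (s + 1) + 1)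
            = B / Phi * (Phi ^ (s + 1) * (B / Phi ^ 2) ^ Nat.count (fun i => 1 < b i) (s + 1)) := by
              rw [pow_succ, pow_succ (B / Phi ^ 2)]
              field_simp
          _ ≤ B / Phi * goldenDen b s := by gcongr
          _ ≤ goldenDen b (s + 1) :=
            div_phi_mul_goldenDen_le hb hB ((hsize (s + 1)).resolve_left h1)
  cases t with
  | zero => simp [den_zero, one_lt_phi.le]
  | succ s => exact (hgolden s).trans (goldenDen_le hb s)

end GoldenDen

lemma cfSum_succ (b : ℕ → ℕ) (t : ℕ) : cfSum b (t + 1) = cfSum b t + b t :=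
  Finset.sum_range_succ b t

lemma cfSum_congr {a b : ℕ → ℕ} {t : ℕ} (h : ∀ i < t, a i = b i) : cfSum a t = cfSum b t :=
  Finset.sum_congr rfl fun i hi => h i (Finset.mem_range.mp hi)

lemma cfSum_strictMono {b : ℕ → ℕ} (hb : ∀ i, 0 < b i) : StrictMono (cfSum b) :=
  strictMono_nat_of_lt_succ fun t => by rw [cfSum_succ]; exact Nat.lt_add_of_pos_right (hb t)

noncomputable def minkowskiTerm (b : ℕ → ℕ) (k : ℕ) : ℝ := (-1) ^ k * (2 / 2 ^ cfSum b (k + 1))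

section Series

variable {b : ℕ → ℕ} (hb : ∀ i, 0 < b i)
include hb

lemma summable_two_div_two_pow_cfSum : Summable fun n => (2 : ℝ) / 2 ^ cfSum b n := by
  refine Summable.of_nonneg_of_le (fun n => by positivity) (fun n => ?_)
    (summable_geometric_two.mul_left 2)
  rw [one_div_pow, mul_one_div]
  gcongr
  · norm_num
  · exact (cfSum_strictMono hb).id_le n

lemma summable_minkowskiTerm : Summable (minkowskiTerm b) :=
  ((summable_nat_add_iff (f := fun n => (2 : ℝ) / 2 ^ cfSum b n) 1).mpr
    (summable_two_div_two_pow_cfSum hb)).alternating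

lemma neg_one_pow_mul_tsum_minkowskiTerm_mem (t : ℕ) :
    (-1) ^ t * ∑' k, minkowskiTerm b (k + t)
      ∈ Set.Icc (1 / 2 ^ cfSum b (t + 1)) (2 / 2 ^ cfSum b (t + 1)) := by
  set f : ℕ → ℝ := fun j => 2 / 2 ^ cfSum b (j + t + 1) with hf
  have hanti : Antitone f := fun i j hij => by
    simp only [hf]
    gcongr
    · norm_num
    · exact (cfSum_strictMono hb).monotone (by omega)
  have hsum : Summable f := (summable_nat_add_iff (f := fun n => (2 : ℝ) / 2 ^ cfSum b n)
    (t + 1)).mpr (summable_two_div_two_pow_cfSum hb)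
  have hsign : ((-1 : ℝ) ^ t) * (-1) ^ t = 1 := by rw [← mul_pow]; norm_num
  have heq : (-1) ^ t * ∑' k, minkowskiTerm b (k + t) = ∑' k, (-1) ^ k * f k := by
    rw [← tsum_mul_left]
    refine tsum_congr fun k => ?_
    simp only [minkowskiTerm, hf, pow_add]
    linear_combination (-1 : ℝ) ^ k * (2 / 2 ^ cfSum b (k + t + 1)) * hsign
  have hlim := hsum.tendsto_alternating_series_tsum
  have hlow := hanti.alternating_series_le_tendsto hlim 1
  have hup := hanti.tendsto_le_alternating_series hlim 0
  simp only [Finset.sum_range_succ, Finset.sum_range_zero, mul_zero, zero_add, pow_zero, pow_one,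
    one_mul, neg_one_mul] at hlow hup
  have hf0 : f 0 = 2 / 2 ^ cfSum b (t + 1) := by simp only [hf, zero_add]
  have htwo : (2 : ℝ) / 2 ^ cfSum b (t + 1) = 2 * (1 / 2 ^ cfSum b (t + 1)) := by ring
  have hf1 : f 1 ≤ 1 / 2 ^ cfSum b (t + 1) := by
    have hstep : cfSum b (t + 1) + 1 ≤ cfSum b (1 + t + 1) :=
      (cfSum_strictMono hb) (by omega : t + 1 < 1 + t + 1)
    calc f 1 ≤ (2 : ℝ) / 2 ^ (cfSum b (t + 1) + 1) := by
          simp only [hf]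
          gcongr
          norm_num
      _ = 1 / 2 ^ cfSum b (t + 1) := by rw [pow_succ]; field_simp
  rw [heq]
  constructor <;> linarith

end Series

lemma one_div_two_pow_le_abs_tsum_sub {a b : ℕ → ℕ} (ha : ∀ i, 0 < a i) (hb : ∀ i, 0 < b i)
    {t : ℕ} (hagree : ∀ i < t, a i = b i) (hbt : a t + 2 ≤ b t) :
    1 / 2 ^ (cfSum a (t + 1) + 1) ≤ |∑' k, minkowskiTerm a k - ∑' k, minkowskiTerm b k| := by
  have hhead : ∑ k ∈ Finset.range t, minkowskiTerm a k = ∑ k ∈ Finset.range t, minkowskiTerm b k :=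
    Finset.sum_congr rfl fun k hk => by
      have hk : k < t := Finset.mem_range.mp hk
      rw [minkowskiTerm, minkowskiTerm, cfSum_congr fun i hi => hagree i (by omega)]
  have hsplit : ∑' k, minkowskiTerm a k - ∑' k, minkowskiTerm b k
      = ∑' k, minkowskiTerm a (k + t) - ∑' k, minkowskiTerm b (k + t) := by
    rw [← (summable_minkowskiTerm ha).sum_add_tsum_nat_add t,
      ← (summable_minkowskiTerm hb).sum_add_tsum_nat_add t, hhead]
    ring
  have hS : cfSum a (t + 1) + 2 ≤ cfSum b (t + 1) := by
    rw [cfSum_succ, cfSum_succ, cfSum_congr hagree]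
    omega
  have hA := (neg_one_pow_mul_tsum_minkowskiTerm_mem ha t).1
  have hB := (neg_one_pow_mul_tsum_minkowskiTerm_mem hb t).2
  have hB' : (2 : ℝ) / 2 ^ cfSum b (t + 1) ≤ 1 / 2 ^ (cfSum a (t + 1) + 1) :=
    calc (2 : ℝ) / 2 ^ cfSum b (t + 1) ≤ 2 / 2 ^ (cfSum a (t + 1) + 2) := by
          gcongr
          norm_num
      _ = 1 / 2 ^ (cfSum a (t + 1) + 1) := by rw [pow_succ _ (_ + 1)]; field_simp
  calc 1 / 2 ^ (cfSum a (t + 1) + 1)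
      = 1 / 2 ^ cfSum a (t + 1) - 1 / 2 ^ (cfSum a (t + 1) + 1) := by
        rw [pow_succ]; field_simp; ring
    _ ≤ (-1) ^ t * (∑' k, minkowskiTerm a (k + t) - ∑' k, minkowskiTerm b (k + t)) := by
      linarith
    _ ≤ |∑' k, minkowskiTerm a k - ∑' k, minkowskiTerm b k| := by
      rw [hsplit]
      exact (le_abs_self _).trans (by rw [abs_mul, abs_pow, abs_neg, abs_one, one_pow, one_mul])

end CF

lemma IsMinkowski.eq_tsum {Q : ℝ → ℝ} (hQ : IsMinkowski Q) {x : ℝ} (hx : x ∈ Set.Ioo 0 1)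
    {b : ℕ → ℕ} (h : IsCFOf x b) : Q x = ∑' k, CF.minkowskiTerm b k := by
  have hirr : Irrational x := CF.eq_value_of_isCFOf h ▸ CF.irrational_value h.1
  rw [hQ.2.2.2.2 x hx hirr b h]
  refine tsum_congr fun k => ?_
  rw [CF.minkowskiTerm, zpow_sub₀ two_ne_zero, zpow_one, zpow_natCast]

lemma eventually_mul_sq_den_le {Q : ℝ → ℝ} (hQ : IsMinkowski Q) {x : ℝ} (hx : x ∈ Set.Ioo 0 1)
    {a : ℕ → ℕ} (ha : IsCFOf x a) (hder : HasDerivAt Q 0 x) {C : ℝ} (hC : 0 < C) :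
    ∀ᶠ t in atTop, C * (CF.den a t : ℝ) ^ 2 ≤ 2 ^ cfSum a (t + 1) := by
  have hpos := ha.1
  set b : ℕ → ℕ → ℕ := fun t => Function.update a t (a t + 2) with hbdef
  have hb : ∀ t i, 0 < b t i := fun t i => by
    rcases eq_or_ne i t with rfl | hit
    · simp [hbdef]
    · simp [hbdef, hit, hpos i]
  have hagree : ∀ t, ∀ i < t, a i = b t i := fun t i hi =>
    (Function.update_of_ne hi.ne _ _).symm
  have hy : Tendsto (fun t => CF.value (b t)) atTop (𝓝 x) :=
    CF.eq_value_of_isCFOf ha ▸ CF.tendsto_value hpos hb hagree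
  have hsmall : ∀ᶠ u in 𝓝 x, ‖Q u - Q x‖ ≤ 1 / (8 * C) * ‖u - x‖ := by
    have := hder.isLittleO
    simp only [smul_zero, sub_zero] at this
    exact this.def (by positivity)
  filter_upwards [hy.eventually hsmall, hy.eventually (isOpen_Ioo.mem_nhds hx),
    eventually_ge_atTop 1] with t hQt hyt ht
  have hq : (0 : ℝ) < CF.den a t := by exact_mod_cast CF.den_pos hpos t
  have hjump := CF.one_div_two_pow_le_abs_tsum_sub hpos (hb t) (hagree t) (by simp [hbdef])
  rw [← hQ.eq_tsum hx ha, ← hQ.eq_tsum hyt (CF.isCFOf_value (hb t)), abs_sub_comm,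
    ← Real.norm_eq_abs] at hjump
  have hdist : ‖CF.value (b t) - x‖ ≤ 4 / (CF.den a t : ℝ) ^ 2 := by
    rw [Real.norm_eq_abs, abs_sub_comm, CF.eq_value_of_isCFOf ha]
    exact CF.abs_value_sub_value_le hpos (hb t) ht (hagree t)
  have hchain : 1 / 2 ^ (cfSum a (t + 1) + 1) ≤ 1 / (8 * C) * (4 / (CF.den a t : ℝ) ^ 2) :=
    hjump.trans (hQt.trans (by gcongr))
  rw [pow_succ, div_le_iff₀ (by positivity)] at hchain
  field_simp at hchain
  nlinarith

open Real in
lemma sub_kappa1_mul_gt {S s w w' : ℕ} (h : 2 ^ 8 * 8 ^ w * Phi ^ (2 * s) ≤ Phi ^ 2 * 2 ^ S)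
    (hw : w' ≤ w + 1) : (S : ℝ) - kappa1 * (s + 1 : ℕ) > 3 * w' := by
  have hφ := CF.phi_pos
  have hl2 : 0 < log 2 := log_pos one_lt_two
  have hlφ : log Phi < log 2 := log_lt_log hφ CF.phi_lt_two
  have hlog := log_le_log (by positivity) h
  rw [log_mul (by positivity) (by positivity), log_mul (by positivity) (by positivity),
    log_mul (by positivity) (by positivity), log_pow, log_pow, log_pow, log_pow, log_pow,
    show (8 : ℝ) = 2 ^ 3 by norm_num, log_pow] at hlog
  have hw' : (w' : ℝ) * log 2 ≤ (w + 1) * log 2 := by gcongr; exact_mod_cast hw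
  have hκ : kappa1 * (s + 1 : ℕ) < S - 3 * w' := by
    rw [kappa1, div_mul_eq_mul_div, div_lt_iff₀ hl2]
    push_cast at hlog ⊢
    nlinarith
  linarith

theorem stmt10_general (x : ℝ) (hx : x ∈ Set.Ioo (0:ℝ) 1)
    (a : ℕ → ℕ) (ha : IsCFOf x a)
    (hsize : ∀ i : ℕ, a i = 1 ∨ 11 < a i)
    (Q : ℝ → ℝ) (hQ : IsMinkowski Q) (hder : HasDerivAt Q 0 x) :
    ∃ T : ℕ, ∀ t : ℕ, T < t →
      (cfSum a t : ℝ) - kappa1 * t >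
        3 * (((Finset.range t).filter (fun i => 1 < a i)).card : ℝ) := by
  have hφ := CF.phi_pos
  obtain ⟨T, hT⟩ := eventually_atTop.mp
    (eventually_mul_sq_den_le hQ hx ha hder (C := 2 ^ 8) (by positivity))
  refine ⟨T, fun t ht => ?_⟩
  obtain ⟨s, rfl⟩ : ∃ s, t = s + 1 := ⟨t - 1, by omega⟩
  set w := Nat.count (fun i => 1 < a i) s
  obtain ⟨X, hX, h8, hden⟩ : ∃ X : ℝ, 0 ≤ X ∧ 8 ≤ X ^ 2 ∧ Phi ^ s * X ^ w ≤ Phi * CF.den a s := by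
    refine ⟨12 / Phi ^ 2, by positivity, ?_, CF.pow_mul_pow_count_le_den ha.1 (by norm_num)
      (fun i => (hsize i).imp_right fun h => by exact_mod_cast (h : 12 ≤ a i)) s⟩
    rw [div_pow, le_div_iff₀ (by positivity)]
    nlinarith [pow_le_pow_left₀ hφ.le CF.phi_lt_two.le 4]
  rw [← Nat.count_eq_card_filter_range]
  refine sub_kappa1_mul_gt (w := w) ?_ (by rw [Nat.count_succ]; split_ifs <;> omega)
  calc (2 : ℝ) ^ 8 * 8 ^ w * Phi ^ (2 * s) ≤ 2 ^ 8 * (X ^ 2) ^ w * Phi ^ (2 * s) := by gcongr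
    _ = 2 ^ 8 * (Phi ^ s * X ^ w) ^ 2 := by ring
    _ ≤ 2 ^ 8 * (Phi * CF.den a s) ^ 2 := by gcongr
    _ = Phi ^ 2 * (2 ^ 8 * (CF.den a s) ^ 2) := by ring
    _ ≤ Phi ^ 2 * 2 ^ cfSum a (s + 1) := by gcongr; exact hT s (by omega)

/-- If `?'(x) = 0` and every partial quotient is `1` or greater than `11`, then eventually
`S_x(t) - κ₁ t > 3 w(A_t)`, where `w(A_t)` counts the partial quotients among
`a_1,…,a_t` that are greater than `1`. -/
theorem stmt10 (x : ℝ) (hx : x ∈ Set.Ioo (0:ℝ) 1) (hirr : Irrational x)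
    (a : ℕ → ℕ) (ha : IsCFOf x a)
    (hsize : ∀ i : ℕ, a i = 1 ∨ 11 < a i)
    (Q : ℝ → ℝ) (hQ : IsMinkowski Q) (hder : HasDerivAt Q 0 x) :
    ∃ T : ℕ, ∀ t : ℕ, T < t →
      (cfSum a t : ℝ) - kappa1 * t >
        3 * (((Finset.range t).filter (fun i => 1 < a i)).card : ℝ) :=
  stmt10_general x hx a ha hsize Q hQ hder
end

section
/- Let λ ∈ (0,1), η > 0, ε > 0, and let N, M, i be positive integers with i + M ≤ N. Let c_1,…,c_N be positive reals and set φ_i = (1−λ)·Σ_{k=i+1}^{N} (√λ)^{k−i}/c_k + η·c_i. If c_{i+j} < (1+ε²)·c_i for all 1 ≤ j ≤ M, then φ_i > 2·√( η·√λ·(1+√λ)·(1−(√λ)^M)/(1+ε²) ). -/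
/-!
Write `s = √λ`, so that `1 - λ = 1 - s²`. Keep only the terms `k = i + j`, `1 ≤ j ≤ M`, of the sum
and bound `1 / c_{i+j}` below by `1 / ((1 + ε²) c_i)`: since `(1 - s²) Σ_{j=1}^M s^j` telescopes to
`s (1 + s) (1 - s^M)`, the first part of `φ_i` exceeds `A / c_i` with
`A = s (1 + s) (1 - s^M) / (1 + ε²)`, and AM-GM gives `A / c_i + η c_i ≥ 2 √(η A)`.
-/

open Finset

lemma two_mul_sqrt_mul_le_add {x y : ℝ} (hx : 0 ≤ x) (hy : 0 ≤ y) :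
    2 * √(x * y) ≤ x + y := by
  rw [Real.sqrt_mul hx]
  nlinarith [Real.sq_sqrt hx, Real.sq_sqrt hy, sq_nonneg (√x - √y)]

lemma one_sub_sq_mul_sum_Icc_pow {R : Type*} [CommRing R] (s : R) (M : ℕ) :
    (1 - s ^ 2) * ∑ j ∈ Icc 1 M, s ^ j = s * (1 + s) * (1 - s ^ M) := by
  have hshift : ∑ j ∈ Icc 1 M, s ^ j = s * ∑ j ∈ range M, s ^ j := by
    rw [← Ico_add_one_right_eq_Icc, sum_Ico_eq_sum_range, mul_sum]
    simp only [add_tsub_cancel_right, pow_add, pow_one]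
  rw [hshift]
  linear_combination (-(s * (1 + s))) * geom_sum_mul s M

lemma sum_Icc_add_le_sum_Icc {β : Type*} [AddCommMonoid β] [PartialOrder β]
    [IsOrderedAddMonoid β] {f : ℕ → β} {i M N : ℕ} (hMN : i + M ≤ N)
    (hf : ∀ k ∈ Icc (i + 1) N, 0 ≤ f k) :
    ∑ j ∈ Icc 1 M, f (i + j) ≤ ∑ k ∈ Icc (i + 1) N, f k :=
  calc ∑ j ∈ Icc 1 M, f (i + j) = ∑ k ∈ Icc (i + 1) (i + M), f k := by
        rw [← map_add_left_Icc, sum_map]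
        rfl
    _ ≤ ∑ k ∈ Icc (i + 1) N, f k :=
        sum_le_sum_of_subset_of_nonneg (Icc_subset_Icc_right hMN) fun k hk _ ↦ hf k hk

lemma sum_div_lt_sum_div_of_lt {ι : Type*} {t : Finset ι} (ht : t.Nonempty) {w a : ι → ℝ}
    {b : ℝ} (hw : ∀ j ∈ t, 0 < w j) (ha : ∀ j ∈ t, 0 < a j) (hab : ∀ j ∈ t, a j < b) :
    (∑ j ∈ t, w j) / b < ∑ j ∈ t, w j / a j := by
  rw [sum_div]
  exact sum_lt_sum_of_nonempty ht fun j hj ↦ div_lt_div_of_pos_left (hw j hj) (ha j hj) (hab j hj)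

lemma lt_one_sub_sq_mul_sum_pow_div {s q : ℝ} (hs : 0 < s) (hs1 : s < 1) {c : ℕ → ℝ}
    {i M N : ℕ} (hM : 1 ≤ M) (hMN : i + M ≤ N) (hc : ∀ k ∈ Icc (i + 1) N, 0 < c k)
    (hsmall : ∀ j ∈ Icc 1 M, c (i + j) < q * c i) :
    s * (1 + s) * (1 - s ^ M) / (q * c i) <
      (1 - s ^ 2) * ∑ k ∈ Icc (i + 1) N, s ^ (k - i) / c k := by
  have hs_sq : 0 < 1 - s ^ 2 := by nlinarith
  calc s * (1 + s) * (1 - s ^ M) / (q * c i)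
        = (1 - s ^ 2) * ((∑ j ∈ Icc 1 M, s ^ j) / (q * c i)) := by
        rw [mul_div_assoc', one_sub_sq_mul_sum_Icc_pow]
    _ < (1 - s ^ 2) * ∑ j ∈ Icc 1 M, s ^ j / c (i + j) := by
        gcongr
        exact sum_div_lt_sum_div_of_lt (nonempty_Icc.mpr hM) (fun j _ ↦ pow_pos hs j)
          (fun j hj ↦ hc _ (by grind)) hsmall
    _ ≤ (1 - s ^ 2) * ∑ k ∈ Icc (i + 1) N, s ^ (k - i) / c k := by
        gcongr
        simpa using sum_Icc_add_le_sum_Icc (f := fun k ↦ s ^ (k - i) / c k) hMN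
          fun k hk ↦ (div_pos (pow_pos hs _) (hc k hk)).le

theorem stmt15_general (lam η ε : ℝ) (hlam : lam ∈ Set.Ioo (0:ℝ) 1) (hη : 0 < η)
    (N M i : ℕ) (hM : 1 ≤ M) (hiMN : i + M ≤ N)
    (c : ℕ → ℝ) (hc : ∀ k, 1 ≤ k → k ≤ N → 0 < c k)
    (hsmall : ∀ j, 1 ≤ j → j ≤ M → c (i + j) < (1 + ε ^ 2) * c i) :
    (1 - lam) * ∑ k ∈ Finset.Icc (i + 1) N, (Real.sqrt lam) ^ (k - i) / c k + η * c i >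
      2 * Real.sqrt
          (η * Real.sqrt lam * (1 + Real.sqrt lam) * (1 - (Real.sqrt lam) ^ M) / (1 + ε ^ 2)) := by
  set s := √lam
  have hs : 0 < s := Real.sqrt_pos.mpr hlam.1
  have hs1 : s < 1 := (Real.sqrt_lt' one_pos).mpr (by simpa using hlam.2)
  have hci : 0 < c i := pos_of_mul_pos_right
    ((hc (i + 1) le_add_self (by omega)).trans (hsmall 1 le_rfl hM)) (by positivity)
  set A := s * (1 + s) * (1 - s ^ M) / (1 + ε ^ 2)
  have hA : 0 ≤ A := by
    have : s ^ M ≤ 1 := pow_le_one₀ hs.le hs1.le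
    have : 0 ≤ 1 - s ^ M := by linarith
    positivity
  have htail : A / c i < (1 - lam) * ∑ k ∈ Icc (i + 1) N, s ^ (k - i) / c k := by
    rw [div_div, ← Real.sq_sqrt hlam.1.le]
    exact lt_one_sub_sq_mul_sum_pow_div hs hs1 hM hiMN (fun k hk ↦ hc k (by grind) (by grind))
      fun j hj ↦ hsmall j (mem_Icc.mp hj).1 (mem_Icc.mp hj).2
  have hamgm : 2 * √(η * A) ≤ A / c i + η * c i := by
    rw [show η * A = A / c i * (η * c i) by field_simp]
    exact two_mul_sqrt_mul_le_add (by positivity) (by positivity)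
  rw [show η * s * (1 + s) * (1 - s ^ M) / (1 + ε ^ 2) = η * A by ring]
  linarith

/-- If `c_{i+j} < (1+ε²) c_i` for `1 ≤ j ≤ M`, then
`φ_i = (1-λ) Σ_{k=i+1}^{N} (√λ)^{k-i}/c_k + η c_i > 2 √(η √λ (1+√λ)(1-(√λ)^M)/(1+ε²))`. -/
theorem stmt15 (lam η ε : ℝ) (hlam : lam ∈ Set.Ioo (0:ℝ) 1) (hη : 0 < η) (hε : 0 < ε)
    (N M i : ℕ) (hi : 1 ≤ i) (hM : 1 ≤ M) (hiMN : i + M ≤ N)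
    (c : ℕ → ℝ) (hc : ∀ k, 1 ≤ k → k ≤ N → 0 < c k)
    (hsmall : ∀ j, 1 ≤ j → j ≤ M → c (i + j) < (1 + ε ^ 2) * c i) :
    (1 - lam) * ∑ k ∈ Finset.Icc (i + 1) N, (Real.sqrt lam) ^ (k - i) / c k + η * c i >
      2 * Real.sqrt
          (η * Real.sqrt lam * (1 + Real.sqrt lam) * (1 - (Real.sqrt lam) ^ M) / (1 + ε ^ 2)) :=
  stmt15_general lam η ε hlam hη N M i hM hiMN c hc hsmall
end

section
/- For every η > 0 and every δ > 0 there exists λ₀ ∈ (0,1) such that for every λ ∈ (λ₀,1) there exists N₀ ∈ ℕ such that for every integer N ≥ N₀ and all positive reals c_1,…,c_N one has max_{1 ≤ i ≤ N} [ (1−λ)·Σ_{k=i+1}^{N} (√λ)^{k−i}/c_k + η·c_i ] ≥ √(8η) − δ. -/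
/-!
Write `s = √λ` and `x_i = (1 - s²) Σ_{k>i} s^{k-i} / c_k`, so that `φ_i = x_i + η c_i`,
`x_N = 0` and `x_{i-1} = s ((1 - s²) / c_i + x_i)`. If every `φ_i` were below some `B > 0`,
then `1 / c_i > η / (B - x_i)`, and together with `x_i (B - x_i) ≤ B² / 4` the recursion makes
`x` grow by a fixed `ε > 0` at each step from `N` down to `1` as soon as `B² / 4 < s (1 + s) η`.
Then `x_1 ≥ (N - 1) ε`, contradicting `x_1 < B` for large `N`. For `B` just below `√(8η)` the
condition `B² / 4 < s (1 + s) η` holds once `λ` is close enough to `1`.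
-/

open Finset

section DiscountedTail

variable {K : Type*} [Field K]

def discountedTail (s : K) (c : ℕ → K) (N i : ℕ) : K :=
  ∑ k ∈ Icc (i + 1) N, s ^ (k - i) / c k

theorem discountedTail_self (s : K) (c : ℕ → K) (N : ℕ) : discountedTail s c N N = 0 := by
  simp [discountedTail]

theorem discountedTail_eq_mul_add {s : K} {c : ℕ → K} {N i : ℕ} (hi : i + 1 ≤ N) :
    discountedTail s c N i = s * (1 / c (i + 1) + discountedTail s c N (i + 1)) := by
  have hIcc : Icc (i + 1) N = insert (i + 1) (Icc (i + 2) N) := by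
    ext k; simp only [mem_Icc, mem_insert]; omega
  rw [discountedTail, discountedTail, hIcc, sum_insert (by simp), mul_add, mul_sum,
    Nat.add_sub_cancel_left, pow_one]
  congr 1
  · ring
  · refine sum_congr rfl fun k hk => ?_
    rw [show k - i = k - (i + 1) + 1 by simp only [mem_Icc] at hk; omega, pow_succ]
    ring

theorem discountedTail_nonneg [LinearOrder K] [IsStrictOrderedRing K] {s : K} {c : ℕ → K}
    {N : ℕ} (hs : 0 ≤ s) (hc : ∀ k, 1 ≤ k → k ≤ N → 0 < c k) (i : ℕ) :
    0 ≤ discountedTail s c N i :=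
  sum_nonneg fun k hk => by
    simp only [mem_Icc] at hk
    exact div_nonneg (pow_nonneg hs _) (hc k (by omega) hk.2).le

end DiscountedTail

theorem add_sub_mul_le_of_forall_add_le {K : Type*} [CommRing K] [LinearOrder K]
    [IsStrictOrderedRing K] {x : ℕ → K} {ε : K} {m n : ℕ} (hmn : m ≤ n)
    (h : ∀ i, m ≤ i → i < n → x (i + 1) + ε ≤ x i) : x n + ((n : K) - m) * ε ≤ x m := by
  induction n, hmn using Nat.le_induction with
  | base => simp
  | succ n hmn ih =>
    have hlast := h n hmn n.lt_succ_self
    have hprev := ih fun i hi hin => h i hi (by omega)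
    push_cast
    linarith

theorem add_gap_le_mul_add {K : Type*} [Field K] [LinearOrder K] [IsStrictOrderedRing K]
    {s η B t c : K} (hs0 : 0 < s) (hs1 : s < 1) (ht : 0 ≤ t) (hc : 0 < c)
    (htc : t + η * c < B) (hG : B ^ 2 / 4 < s * (1 + s) * η) :
    t + (1 - s) * (s * (1 + s) * η - B ^ 2 / 4) / B ≤ s * ((1 - s ^ 2) / c + t) := by
  have hη : 0 < η := pos_of_mul_pos_right (lt_of_le_of_lt (by positivity) hG) (by positivity)
  have hBt : 0 < B - t := by nlinarith
  have hinv : η / (B - t) ≤ 1 / c := by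
    rw [div_le_div_iff₀ hBt hc]; nlinarith
  have hamgm : t * (B - t) ≤ B ^ 2 / 4 := by nlinarith [sq_nonneg (t - B / 2)]
  calc t + (1 - s) * (s * (1 + s) * η - B ^ 2 / 4) / B
      ≤ t + (1 - s) * ((s * (1 + s) * η - t * (B - t)) / (B - t)) := by
        rw [mul_div_assoc]
        gcongr
        · linarith
        · linarith
    _ = t + (1 - s) * (s * (1 + s) * (η / (B - t)) - t) := by
        field_simp
    _ ≤ t + (1 - s) * (s * (1 + s) * (1 / c) - t) := by
        gcongr
    _ = s * ((1 - s ^ 2) / c + t) := by ring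

theorem exists_le_mul_discountedTail_add {s η B : ℝ} (hs0 : 0 < s) (hs1 : s < 1) (hB : 0 < B)
    (hG : B ^ 2 / 4 < s * (1 + s) * η) :
    ∃ N0 : ℕ, ∀ N, N0 ≤ N → ∀ c : ℕ → ℝ, (∀ k, 1 ≤ k → k ≤ N → 0 < c k) →
      ∃ i, 1 ≤ i ∧ i ≤ N ∧ B ≤ (1 - s ^ 2) * discountedTail s c N i + η * c i := by
  set ε := (1 - s) * (s * (1 + s) * η - B ^ 2 / 4) / B
  have hε : 0 < ε := div_pos (mul_pos (by linarith) (by linarith)) hB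
  refine ⟨⌈B / ε⌉₊ + 1, fun N hN c hc => ?_⟩
  by_contra! hlt
  set x := fun i => (1 - s ^ 2) * discountedTail s c N i
  have hx : ∀ i, 0 ≤ x i := fun i =>
    mul_nonneg (by nlinarith) (discountedTail_nonneg hs0.le hc i)
  have hstep : ∀ i, 1 ≤ i → i < N → x (i + 1) + ε ≤ x i := fun i hi hiN => by
    have hrec : x i = s * ((1 - s ^ 2) / c (i + 1) + x (i + 1)) := by
      simp only [x, discountedTail_eq_mul_add hiN]; ring
    rw [hrec]
    exact add_gap_le_mul_add hs0 hs1 (hx _) (hc _ (by omega) hiN) (hlt _ (by omega) hiN) hG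
  have hclimb := add_sub_mul_le_of_forall_add_le (by omega) hstep
  have hxN : x N = 0 := by simp [x, discountedTail_self]
  have hx1 : x 1 < B := by nlinarith [hlt 1 le_rfl (by omega), hc 1 le_rfl (by omega)]
  have hNε : B ≤ ((N : ℝ) - 1) * ε := by
    rw [← div_le_iff₀ hε]
    calc B / ε ≤ ⌈B / ε⌉₊ := Nat.le_ceil _
      _ ≤ (N : ℝ) - 1 := by rw [le_sub_iff_add_le]; exact_mod_cast hN
  push_cast at hclimb
  linarith

/-- For every `η > 0` and `δ > 0` there is `λ₀ ∈ (0,1)` such that for every `λ ∈ (λ₀,1)`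
there is `N₀` such that for every `N ≥ N₀` and all positive `c_1,…,c_N`,
`max_{1 ≤ i ≤ N} [(1-λ) Σ_{k=i+1}^{N} (√λ)^{k-i}/c_k + η c_i] ≥ √(8η) - δ`. -/
theorem stmt16 (η δ : ℝ) (hη : 0 < η) (hδ : 0 < δ) :
    ∃ lam0 ∈ Set.Ioo (0:ℝ) 1, ∀ lam ∈ Set.Ioo lam0 1, ∃ N0 : ℕ, ∀ N : ℕ, N0 ≤ N →
      ∀ c : ℕ → ℝ, (∀ k, 1 ≤ k → k ≤ N → 0 < c k) →
        ∃ i : ℕ, 1 ≤ i ∧ i ≤ N ∧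
          (1 - lam) * ∑ k ∈ Finset.Icc (i + 1) N, (Real.sqrt lam) ^ (k - i) / c k + η * c i ≥
            Real.sqrt (8 * η) - δ := by
  set r := √(8 * η)
  have hr : 0 < r := Real.sqrt_pos.2 (by positivity)
  have hr2 : r ^ 2 = 8 * η := Real.sq_sqrt (by positivity)
  -- any `B ∈ (0, √(8η))` with `B ≥ √(8η) - δ` works, and `λ₀ = B² / (8η)` is then in `(0, 1)`
  set B := max (r - δ) (r / 2)
  have hB : 0 < B := lt_max_of_lt_right (by positivity)
  have hBr : B < r := max_lt (by linarith) (by linarith)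
  refine ⟨B ^ 2 / (8 * η), ⟨by positivity, ?_⟩, fun lam ⟨hlam0, hlam1⟩ => ?_⟩
  · rw [div_lt_one (by positivity), ← hr2]
    exact pow_lt_pow_left₀ hBr hB.le two_ne_zero
  have hlam : 0 < lam := lt_trans (by positivity) hlam0
  set s := √lam
  have hs2 : s ^ 2 = lam := Real.sq_sqrt hlam.le
  have hs0 : 0 < s := Real.sqrt_pos.2 hlam
  have hs1 : s < 1 := (Real.sqrt_lt' one_pos).2 (by rwa [one_pow])
  -- s(1+s) ≥ 2s² = 2λ and B² < 8ηλ
  have hG : B ^ 2 / 4 < s * (1 + s) * η := by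
    have hss : s ^ 2 ≤ s := by nlinarith
    rw [div_lt_iff₀ (by positivity)] at hlam0
    nlinarith [mul_le_mul_of_nonneg_right hss hη.le]
  obtain ⟨N0, hN0⟩ := exists_le_mul_discountedTail_add hs0 hs1 hB hG
  refine ⟨N0, fun N hN c hc => ?_⟩
  obtain ⟨i, hi1, hiN, hi⟩ := hN0 N hN c hc
  rw [hs2] at hi
  exact ⟨i, hi1, hiN, le_trans (le_max_left _ _) hi⟩
end

section
/- For every η > 0 and every δ > 0 there exists λ₀ ∈ (0,1) such that for every λ ∈ (λ₀,1) there exists N₀ ∈ ℕ such that for every integer N ≥ N₀ and all positive reals c_1,…,c_N one has max_{1 ≤ i ≤ N} (√λ)^i·[ (1−λ)·Σ_{k=i+1}^{N} (√λ)^{k−i}/c_k + η·c_i ] ≥ √(2η) − δ. -/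
/-!
Let `M` bound every `√λ ^ i φ_i`, put `a k = √λ ^ k / c k` and `u i = M - (1 - λ) ∑_{k ≥ i} a k`.
The bound at `i` reads `η λ ^ i / a i ≤ u (i+1)`, so `u i ≤ u (i+1) - (1 - λ) η λ ^ i / u (i+1)`,
a discrete form of `(u²)' ≥ 2 (1 - λ) η λ ^ i`. Summing from `i = 2` gives
`M ^ 2 = u (N+1) ^ 2 ≥ 2 η λ ^ 2 (1 - λ ^ (N-1))` up to an error of at most
`-η (1 - λ) log (1 - λ)`. As `λ → 1` the error vanishes and `2 η λ ^ 2 → 2 η`, and for fixed `λ`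
the term `λ ^ (N-1)` vanishes as `N → ∞`.
-/

open Finset Filter Topology Real

theorem sum_range_le_sub_of_le {G : Type*} [AddCommGroup G] [PartialOrder G]
    [IsOrderedAddMonoid G] {f g : ℕ → G} {n : ℕ} (h : ∀ j < n, g j ≤ f (j + 1) - f j) :
    ∑ j ∈ range n, g j ≤ f n - f 0 :=
  (sum_le_sum fun j hj => h j (mem_range.1 hj)).trans_eq (sum_range_sub f n)

theorem sq_add_le_sq_of_le_sub_div {x y r : ℝ} (hx : 0 ≤ x) (hy : 0 < y) (hr : 0 ≤ r)
    (h : x ≤ y - r / y) : x ^ 2 + r ≤ y ^ 2 := by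
  have hxy : x ≤ y := h.trans (sub_le_self _ (div_nonneg hr hy.le))
  have hmul : x * y ≤ y ^ 2 - r := by
    calc x * y ≤ (y - r / y) * y := mul_le_mul_of_nonneg_right h hy.le
      _ = y ^ 2 - r := by field_simp
  nlinarith

theorem sq_add_two_mul_sub_le_sq_of_le_sub_div {x y r : ℝ} (hx : 0 ≤ x) (hy : 0 < y)
    (h : x ≤ y - r / y) : x ^ 2 + 2 * r - r ^ 2 / y ^ 2 ≤ y ^ 2 := by
  have hsq : x ^ 2 ≤ (y - r / y) ^ 2 := pow_le_pow_left₀ hx h 2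
  have hexp : (y - r / y) ^ 2 = y ^ 2 - 2 * r + r ^ 2 / y ^ 2 := by field_simp; ring
  linarith

/-- Each step gives `v (j+1) ^ 2 - v j ^ 2 ≥ 2 ρ j - ρ j ^ 2 / v (j+1) ^ 2`, and the error term is
at most `ρ j / (j+1)` by the crude bound `v (j+1) ^ 2 ≥ ρ 0 + ⋯ + ρ j ≥ (j+1) ρ j`. -/
theorem sum_two_mul_sub_div_le_sq {v ρ : ℕ → ℝ} {n : ℕ} (hρ : ∀ j, 0 < ρ j) (hρ' : Antitone ρ)
    (hv : ∀ j ≤ n, 0 < v j) (hstep : ∀ j < n, v j ≤ v (j + 1) - ρ j / v (j + 1)) :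
    ∑ j ∈ range n, (2 * ρ j - ρ j / (j + 1)) ≤ v n ^ 2 := by
  have hsq : ∀ j < n, ρ j ≤ v (j + 1) ^ 2 - v j ^ 2 := fun j hj => by
    linarith [sq_add_le_sq_of_le_sub_div (hv j hj.le).le (hv (j + 1) hj) (hρ j).le (hstep j hj)]
  have hcrude : ∀ j < n, (j + 1) * ρ j ≤ v (j + 1) ^ 2 := fun j hj => by
    calc (j + 1) * ρ j ≤ ∑ k ∈ range (j + 1), ρ k := by
          simpa using card_nsmul_le_sum (range (j + 1)) ρ (ρ j)
            fun k hk => hρ' (Nat.lt_succ_iff.1 (mem_range.1 hk))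
      _ ≤ v (j + 1) ^ 2 - v 0 ^ 2 :=
          sum_range_le_sub_of_le (f := fun k => v k ^ 2) fun k hk => hsq k (by omega)
      _ ≤ v (j + 1) ^ 2 := sub_le_self _ (sq_nonneg _)
  have hsharp : ∀ j < n, 2 * ρ j - ρ j / (j + 1) ≤ v (j + 1) ^ 2 - v j ^ 2 := fun j hj => by
    have hy := hv (j + 1) hj
    have herr : ρ j ^ 2 / v (j + 1) ^ 2 ≤ ρ j / (j + 1) := by
      rw [div_le_div_iff₀ (by positivity) (by positivity)]
      nlinarith [hcrude j hj, hρ j]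
    linarith [sq_add_two_mul_sub_le_sq_of_le_sub_div (hv j hj.le).le hy (hstep j hj)]
  calc ∑ j ∈ range n, (2 * ρ j - ρ j / (j + 1)) ≤ v n ^ 2 - v 0 ^ 2 :=
        sum_range_le_sub_of_le (f := fun k => v k ^ 2) hsharp
    _ ≤ v n ^ 2 := sub_le_self _ (sq_nonneg _)

theorem two_mul_add_mul_log_le_sum {lam η : ℝ} (h0 : 0 ≤ lam) (h1 : lam < 1) (hη : 0 ≤ η)
    (n : ℕ) :
    2 * η * lam ^ 2 * (1 - lam ^ n) + η * ((1 - lam) * log (1 - lam)) ≤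
      ∑ j ∈ range n, (2 * ((1 - lam) * η * lam ^ (j + 2)) -
        (1 - lam) * η * lam ^ (j + 2) / (j + 1)) := by
  have hmain : ∑ j ∈ range n, 2 * ((1 - lam) * η * lam ^ (j + 2)) =
      2 * η * lam ^ 2 * (1 - lam ^ n) := by
    simp only [pow_add, ← mul_sum, ← sum_mul, ← mul_neg_geom_sum lam n]
    ring
  have hlog : ∑ j ∈ range n, lam ^ (j + 1) / (j + 1) ≤ -log (1 - lam) :=
    sum_le_hasSum _ (fun j _ => by positivity)
      (hasSum_pow_div_log_of_abs_lt_one (by rw [abs_of_nonneg h0]; exact h1))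
  have herr : ∑ j ∈ range n, (1 - lam) * η * lam ^ (j + 2) / (j + 1) =
      (1 - lam) * η * lam * ∑ j ∈ range n, lam ^ (j + 1) / (j + 1) := by
    rw [mul_sum]
    refine sum_congr rfl fun j _ => ?_
    ring
  have hsum_nonneg : 0 ≤ ∑ j ∈ range n, lam ^ (j + 1) / (j + 1) :=
    sum_nonneg fun j _ => by positivity
  have hc : 0 ≤ (1 - lam) * η := mul_nonneg (by linarith) hη
  rw [sum_sub_distrib, hmain, herr]
  nlinarith [mul_le_mul_of_nonneg_left hlog hc, mul_le_mul_of_nonneg_left h1.le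
    (mul_nonneg hc hsum_nonneg)]

noncomputable def phi (lam η : ℝ) (N : ℕ) (c : ℕ → ℝ) (i : ℕ) : ℝ :=
  (1 - lam) * ∑ k ∈ Icc (i + 1) N, √lam ^ (k - i) / c k + η * c i

theorem sqrt_pow_mul_phi (lam η : ℝ) (N : ℕ) (c : ℕ → ℝ) (i : ℕ) :
    √lam ^ i * phi lam η N c i =
      (1 - lam) * ∑ k ∈ Icc (i + 1) N, √lam ^ k / c k + η * (√lam ^ i * c i) := by
  have hsum : √lam ^ i * ∑ k ∈ Icc (i + 1) N, √lam ^ (k - i) / c k =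
      ∑ k ∈ Icc (i + 1) N, √lam ^ k / c k := by
    rw [mul_sum]
    refine sum_congr rfl fun k hk => ?_
    rw [← mul_div_assoc, pow_mul_pow_sub _ (by simp at hk; omega)]
  rw [phi, ← hsum]
  ring

theorem sqrt_le_of_sqrt_pow_mul_phi_le {lam η M : ℝ} (h0 : 0 < lam) (h1 : lam < 1) (hη : 0 < η)
    {n : ℕ} {c : ℕ → ℝ} (hc : ∀ k, 1 ≤ k → k ≤ n + 1 → 0 < c k)
    (hM : ∀ i, 1 ≤ i → i ≤ n + 1 → √lam ^ i * phi lam η (n + 1) c i ≤ M) :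
    √(2 * η * lam ^ 2 * (1 - lam ^ n) + η * ((1 - lam) * log (1 - lam))) ≤ M := by
  set s := √lam
  have hs : 0 < s := sqrt_pos.2 h0
  set u : ℕ → ℝ := fun i => M - (1 - lam) * ∑ k ∈ Icc i (n + 1), s ^ k / c k with hu
  have hcu : ∀ i, 1 ≤ i → i ≤ n + 1 → η * (s ^ i * c i) ≤ u (i + 1) := fun i hi1 hi2 => by
    have := hM i hi1 hi2
    rw [sqrt_pow_mul_phi] at this
    simp only [hu]
    linarith
  have hpos : ∀ i, 1 ≤ i → i ≤ n + 1 → 0 < u (i + 1) := fun i hi1 hi2 =>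
    lt_of_lt_of_le (by have := hc i hi1 hi2; positivity) (hcu i hi1 hi2)
  have hstep : ∀ i, 1 ≤ i → i ≤ n + 1 →
      u i ≤ u (i + 1) - (1 - lam) * η * lam ^ i / u (i + 1) := fun i hi1 hi2 => by
    have hci := hc i hi1 hi2
    have hui := hpos i hi1 hi2
    have hsplit : u i = u (i + 1) - (1 - lam) * (s ^ i / c i) := by
      simp only [hu, ← insert_Icc_add_one_left_eq_Icc hi2,
        sum_insert (by simp : i ∉ Icc (i + 1) (n + 1))]
      ring
    have hlam : lam ^ i = s ^ i * s ^ i := by rw [← mul_pow, mul_self_sqrt h0.le]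
    have hai : η * lam ^ i / u (i + 1) ≤ s ^ i / c i := by
      rw [div_le_div_iff₀ hui hci, hlam]
      nlinarith [mul_le_mul_of_nonneg_left (hcu i hi1 hi2) (pow_pos hs i).le]
    rw [hsplit, mul_assoc, mul_div_assoc]
    nlinarith [mul_le_mul_of_nonneg_left hai (sub_pos.2 h1).le]
  have hsum := sum_two_mul_sub_div_le_sq (v := fun j => u (j + 2))
    (ρ := fun j => (1 - lam) * η * lam ^ (j + 2)) (n := n)
    (fun j => by have := sub_pos.2 h1; positivity)
    (fun j k hjk => mul_le_mul_of_nonneg_left (pow_le_pow_of_le_one h0.le h1.le (by omega))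
      (mul_nonneg (sub_pos.2 h1).le hη.le))
    (fun j hj => hpos (j + 1) (by omega) (by omega))
    (fun j hj => hstep (j + 2) (by omega) (by omega))
  have huM : u (n + 2) = M := by simp [hu]
  simp only [huM] at hsum
  rw [sqrt_le_iff]
  exact ⟨(hpos (n + 1) (by omega) le_rfl).le.trans_eq huM,
    (two_mul_add_mul_log_le_sum h0.le h1 hη.le n).trans hsum⟩

/-- For every `η > 0` and `δ > 0` there is `λ₀ ∈ (0,1)` such that for every `λ ∈ (λ₀,1)`
there is `N₀` such that for every `N ≥ N₀` and all positive `c_1,…,c_N`,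
`max_{1 ≤ i ≤ N} (√λ)^i [(1-λ) Σ_{k=i+1}^{N} (√λ)^{k-i}/c_k + η c_i] ≥ √(2η) - δ`. -/
theorem stmt17 (η δ : ℝ) (hη : 0 < η) (hδ : 0 < δ) :
    ∃ lam0 ∈ Set.Ioo (0:ℝ) 1, ∀ lam ∈ Set.Ioo lam0 1, ∃ N0 : ℕ, ∀ N : ℕ, N0 ≤ N →
      ∀ c : ℕ → ℝ, (∀ k, 1 ≤ k → k ≤ N → 0 < c k) →
        ∃ i : ℕ, 1 ≤ i ∧ i ≤ N ∧
          (Real.sqrt lam) ^ i *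
              ((1 - lam) * ∑ k ∈ Finset.Icc (i + 1) N, (Real.sqrt lam) ^ (k - i) / c k +
                η * c i) ≥
            Real.sqrt (2 * η) - δ := by
  set bound : ℝ → ℝ := fun lam => √(2 * η * lam ^ 2 + η * ((1 - lam) * log (1 - lam)))
  -- `x * log x` is continuous at `0`, so `bound` is continuous at `1` with value `√(2η)`.
  have hcont : Continuous bound := by
    have : Continuous fun lam : ℝ => (1 - lam) * log (1 - lam) :=
      continuous_mul_log.comp (continuous_const.sub continuous_id)
    fun_prop
  have hnear : ∀ᶠ lam in 𝓝[<] 1, √(2 * η) - δ < bound lam :=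
    nhdsWithin_le_nhds (hcont.continuousAt.eventually (lt_mem_nhds (by simpa [bound] using hδ)))
  obtain ⟨l, hl1, hl⟩ := mem_nhdsLT_iff_exists_Ioo_subset.1 hnear
  refine ⟨max l (1 / 2), ⟨by positivity, max_lt hl1 (by norm_num)⟩, fun lam hlam => ?_⟩
  have h0 : 0 < lam := lt_of_lt_of_le (by norm_num) ((le_max_right _ _).trans hlam.1.le)
  have hgood : √(2 * η) - δ < bound lam := hl ⟨(le_max_left _ _).trans_lt hlam.1, hlam.2⟩
  have htend : Tendsto (fun n : ℕ =>
      √(2 * η * lam ^ 2 * (1 - lam ^ n) + η * ((1 - lam) * log (1 - lam)))) atTop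
      (𝓝 (bound lam)) := by
    have := (((tendsto_pow_atTop_nhds_zero_of_lt_one h0.le hlam.2).const_sub 1).const_mul
      (2 * η * lam ^ 2)).add_const (η * ((1 - lam) * log (1 - lam)))
    simpa using this.sqrt
  obtain ⟨n0, hn0⟩ := eventually_atTop.1 (htend.eventually (lt_mem_nhds hgood))
  refine ⟨n0 + 1, fun N hN c hc => ?_⟩
  obtain ⟨n, rfl⟩ : ∃ n, N = n + 1 := ⟨N - 1, by omega⟩
  by_contra! hlt
  exact (hn0 n (by omega)).not_ge
    (sqrt_le_of_sqrt_pow_mul_phi_le h0 hlam.2 hη hc fun i hi1 hi2 => (hlt i hi1 hi2).le)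
end

section
/- Fix λ ∈ (0,1), η > 0 and N ≥ 2. For D = (d_1,…,d_N) with d_1 ≥ 0 and d_k > 0 for 2 ≤ k ≤ N, define φ̃_i(D) = (1−λ)·Σ_{k=i+1}^{N} λ^k/d_k + η·d_i for 1 ≤ i ≤ N, and φ̃_max(D) = max_{1 ≤ k ≤ N} φ̃_k(D). If D attains the minimum of φ̃_max over all such tuples (i.e., φ̃_max(D) ≤ φ̃_max(D') for every admissible D'), then φ̃_i(D) = φ̃_j(D) for all 1 ≤ i, j ≤ N. -/
/-- `φ̃_i(D) = (1-λ) Σ_{k=i+1}^{N} λ^k / d_k + η d_i`. -/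
noncomputable def phiTilde (lam η : ℝ) (N : ℕ) (d : ℕ → ℝ) (i : ℕ) : ℝ :=
  (1 - lam) * ∑ k ∈ Finset.Icc (i + 1) N, lam ^ k / d k + η * d i

/-!
If some `φ̃ p (D)` is below the maximum `M`, raise `d p` slightly: this keeps `φ̃ p` below `M`
and lowers every `φ̃ i` with `i < p` by a definite amount. Then lower `d (p+1), …, d N` in turn,
each by so little compared with the previous one that, for every `i > p`, the gain `η` times the
decrease of `d i` beats the growth of the tail sum of `φ̃ i`. Every `φ̃ i` then drops strictly
below `M`, contradicting minimality.
-/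

open Finset Function Filter Topology

theorem exists_mem_Ioo_div_lt_div_add (c : ℝ) {y ε : ℝ} (hy : 0 < y) (hε : 0 < ε) :
    ∃ x ∈ Set.Ioo 0 y, c / x < c / y + ε := by
  have hnear : ∀ᶠ x in 𝓝[<] y, c / x < c / y + ε :=
    nhdsWithin_le_nhds <| (continuousAt_const.div continuousAt_id hy.ne').eventually
      (gt_mem_nhds (lt_add_of_pos_right _ hε))
  exact ((show ∀ᶠ x in 𝓝[<] y, x ∈ Set.Ioo 0 y from Ioo_mem_nhdsLT hy).and hnear).exists

namespace PhiTilde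

noncomputable def tail (lam : ℝ) (N : ℕ) (d : ℕ → ℝ) (i : ℕ) : ℝ :=
  ∑ k ∈ Icc (i + 1) N, lam ^ k / d k

variable {lam η : ℝ} {N : ℕ} {d : ℕ → ℝ} {i j : ℕ} {x : ℝ}

theorem phiTilde_eq : phiTilde lam η N d i = (1 - lam) * tail lam N d i + η * d i := rfl

theorem tail_update_of_le (h : j ≤ i) : tail lam N (update d j x) i = tail lam N d i :=
  sum_congr rfl fun k hk => by
    rw [update_of_ne (by have := (mem_Icc.1 hk).1; omega)]

theorem tail_update_of_lt (hij : i < j) (hjN : j ≤ N) :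
    tail lam N (update d j x) i = tail lam N d i - lam ^ j / d j + lam ^ j / x := by
  have hj : j ∈ Icc (i + 1) N := mem_Icc.2 ⟨hij, hjN⟩
  unfold tail
  rw [← add_sum_erase _ _ hj, ← add_sum_erase _ _ hj, update_self,
    sum_congr rfl fun k hk => by rw [update_of_ne (ne_of_mem_erase hk)]]
  ring

theorem phiTilde_update_of_lt (h : j < i) :
    phiTilde lam η N (update d j x) i = phiTilde lam η N d i := by
  rw [phiTilde_eq, phiTilde_eq, tail_update_of_le h.le, update_of_ne h.ne']

theorem exists_phiTilde_lt_on_tail (hlam0 : 0 ≤ lam) (hlam1 : lam ≤ 1) (hη : 0 < η) (m : ℕ)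
    (d : ℕ → ℝ) (hd : ∀ k, m < k → k ≤ N → 0 < d k) {ε : ℝ} (hε : 0 < ε) :
    ∃ d' : ℕ → ℝ, (∀ k ≤ m, d' k = d k) ∧ (∀ k, m < k → k ≤ N → 0 < d' k) ∧
      (∀ i, m < i → i ≤ N → phiTilde lam η N d' i < phiTilde lam η N d i) ∧
      ∀ i ≤ m, tail lam N d' i < tail lam N d i + ε := by
  induction hn : N - m generalizing m d ε with
  | zero =>
    exact ⟨d, fun _ _ => rfl, hd, fun i hi hiN => by omega, fun i _ => by linarith⟩
  | succ n ih =>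
    set j := m + 1
    have hjN : j ≤ N := by omega
    have hdj : 0 < d j := hd j (by omega) hjN
    obtain ⟨x, ⟨hx0, hxj⟩, hxε⟩ := exists_mem_Ioo_div_lt_div_add (lam ^ j) hdj (half_pos hε)
    -- Lower `d j` to `x`; the rest of the tail is then perturbed by less than the gain `η (d j - x)`.
    obtain ⟨ε', hε', hε'ε, hε'x⟩ : ∃ ε' > 0, ε' ≤ ε / 2 ∧ ε' < η * (d j - x) :=
      ⟨min (ε / 2) (η * (d j - x) / 2), lt_min (half_pos hε) (by nlinarith), min_le_left _ _,
        (min_le_right _ _).trans_lt (by nlinarith)⟩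
    obtain ⟨d', hagree, hpos, hphi, htail⟩ := ih j (update d j x)
      (fun k hk hkN => by rw [update_of_ne (by omega)]; exact hd k (by omega) hkN) hε' (by omega)
    have hd'j : d' j = x := by rw [hagree j le_rfl, update_self]
    refine ⟨d', fun k hk => ?_, fun k hk hkN => ?_, fun i hi hiN => ?_, fun i hi => ?_⟩
    · rw [hagree k (by omega), update_of_ne (by omega)]
    · rcases (Nat.succ_le_of_lt hk).eq_or_lt with rfl | hk
      · rw [hd'j]; exact hx0
      · exact hpos k hk hkN
    · rcases (Nat.succ_le_of_lt hi).eq_or_lt with rfl | hi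
      · have hT := htail _ le_rfl
        rw [tail_update_of_le le_rfl] at hT
        have : (1 - lam) * tail lam N d' j ≤ (1 - lam) * tail lam N d j + ε' := by nlinarith
        rw [phiTilde_eq, phiTilde_eq, hd'j]
        linarith
      · exact (hphi i hi hiN).trans_eq (phiTilde_update_of_lt hi)
    · have hT := htail i (by omega)
      rw [tail_update_of_lt (by omega) hjN] at hT
      linarith

theorem exists_forall_phiTilde_lt (hlam : lam ∈ Set.Ioo 0 1) (hη : 0 < η) (hd1 : 0 ≤ d 1)
    (hd : ∀ k, 2 ≤ k → k ≤ N → 0 < d k) {M : ℝ} (hle : ∀ i ∈ Icc 1 N, phiTilde lam η N d i ≤ M)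
    {p : ℕ} (hp : p ∈ Icc 1 N) (hlt : phiTilde lam η N d p < M) :
    ∃ d' : ℕ → ℝ, 0 ≤ d' 1 ∧ (∀ k, 2 ≤ k → k ≤ N → 0 < d' k) ∧
      ∀ i ∈ Icc 1 N, phiTilde lam η N d' i < M := by
  obtain ⟨hlam0, hlam1⟩ := hlam
  obtain ⟨hp1, hpN⟩ := mem_Icc.1 hp
  obtain ⟨δ, hδ, hηδ⟩ : ∃ δ > 0, η * δ = (M - phiTilde lam η N d p) / 2 :=
    ⟨(M - phiTilde lam η N d p) / (2 * η), div_pos (by linarith) (by linarith), by field_simp⟩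
  set d₁ := update d p (d p + δ) with hd₁def
  have hd₁ : ∀ k, d k ≤ d₁ k := fun k => by
    rcases eq_or_ne k p with rfl | hk
    · rw [hd₁def, update_self]; linarith
    · rw [hd₁def, update_of_ne hk]
  -- Raising `d p` lowers every `φ̃ i` with `i < p` by a fixed amount, which bounds the allowed `ε`.
  obtain ⟨ε, hε, hεδ, hεtail⟩ : ∃ ε > 0, ε ≤ η * δ ∧
      ∀ i, 1 ≤ i → i < p → tail lam N d₁ i + ε ≤ tail lam N d i := by
    by_cases hp2 : 2 ≤ p
    · have hgain : lam ^ p / (d p + δ) < lam ^ p / d p :=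
        div_lt_div_of_pos_left (pow_pos hlam0 p) (hd p hp2 hpN) (by linarith)
      refine ⟨min (η * δ) (lam ^ p / d p - lam ^ p / (d p + δ)),
        lt_min (mul_pos hη hδ) (by linarith), min_le_left _ _, fun i _ hip => ?_⟩
      rw [tail_update_of_lt hip hpN]
      linarith [min_le_right (η * δ) (lam ^ p / d p - lam ^ p / (d p + δ))]
    · exact ⟨η * δ, mul_pos hη hδ, le_rfl, fun i hi hip => by omega⟩
  obtain ⟨d', hagree, hpos, hphi, htail⟩ := exists_phiTilde_lt_on_tail hlam0.le hlam1.le hη p d₁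
    (fun k hk hkN => (hd k (by omega) hkN).trans_le (hd₁ k)) hε
  refine ⟨d', (hagree 1 hp1).symm ▸ hd1.trans (hd₁ 1), fun k hk hkN => ?_, fun i hi => ?_⟩
  · rcases le_or_gt k p with hkp | hkp
    · exact (hagree k hkp).symm ▸ (hd k hk hkN).trans_le (hd₁ k)
    · exact hpos k hkp hkN
  obtain ⟨hi1, hiN⟩ := mem_Icc.1 hi
  rcases lt_trichotomy i p with hip | rfl | hip
  · have hT : tail lam N d' i < tail lam N d i := (htail i hip.le).trans_le (hεtail i hi1 hip)
    calc phiTilde lam η N d' i = (1 - lam) * tail lam N d' i + η * d i := by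
          rw [phiTilde_eq, hagree i hip.le, hd₁def, update_of_ne hip.ne]
      _ < phiTilde lam η N d i := by rw [phiTilde_eq]; gcongr
      _ ≤ M := hle i hi
  · have hT := htail i le_rfl
    rw [tail_update_of_le le_rfl] at hT
    rw [phiTilde_eq, hagree i le_rfl, hd₁def, update_self]
    rw [phiTilde_eq] at hηδ
    nlinarith
  · exact (hphi i hip hiN).trans_le ((phiTilde_update_of_lt hip).trans_le (hle i hi))

end PhiTilde

/-- If `D` minimizes `φ̃_max(D) = max_{1 ≤ k ≤ N} φ̃_k(D)` over all admissible tuples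
(`d_1 ≥ 0`, `d_k > 0` for `2 ≤ k ≤ N`), then all the `φ̃_i(D)` are equal. -/
theorem stmt18 (lam η : ℝ) (hlam : lam ∈ Set.Ioo (0:ℝ) 1) (hη : 0 < η)
    (N : ℕ) (hN : 2 ≤ N)
    (d : ℕ → ℝ) (hd1 : 0 ≤ d 1) (hd : ∀ k, 2 ≤ k → k ≤ N → 0 < d k)
    (hmin : ∀ d' : ℕ → ℝ, 0 ≤ d' 1 → (∀ k, 2 ≤ k → k ≤ N → 0 < d' k) →
      (Finset.Icc 1 N).sup' (Finset.nonempty_Icc.mpr (by omega)) (phiTilde lam η N d) ≤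
        (Finset.Icc 1 N).sup' (Finset.nonempty_Icc.mpr (by omega)) (phiTilde lam η N d')) :
    ∀ i ∈ Finset.Icc 1 N, ∀ j ∈ Finset.Icc 1 N,
      phiTilde lam η N d i = phiTilde lam η N d j := by
  set M := (Finset.Icc 1 N).sup' (Finset.nonempty_Icc.mpr (by omega)) (phiTilde lam η N d)
  have hle : ∀ i ∈ Icc 1 N, phiTilde lam η N d i ≤ M := fun i hi => le_sup' _ hi
  suffices h : ∀ p ∈ Icc 1 N, phiTilde lam η N d p = M by
    intro i hi j hj
    rw [h i hi, h j hj]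
  intro p hp
  refine (hle p hp).antisymm (not_lt.1 fun hlt => ?_)
  obtain ⟨d', hd'1, hd', hlt'⟩ := PhiTilde.exists_forall_phiTilde_lt hlam hη hd1 hd hle hp hlt
  exact (hmin d' hd'1 hd').not_gt ((sup'_lt_iff _).2 hlt')
end

section
/- Let λ ∈ (0,1) and let (e_n)_{n ≥ 1} be the sequence of reals defined by e_1 = 0 and e_{k+1} = ( e_k + √(e_k² + 4(1−λ)λ^{k+1}) )/2 for k ≥ 1. Set X_n = Σ_{k=1}^{n} (1−λ)λ^k. Then for all n ≥ 1: e_n < √(2X_n) and e_{n+1} − e_n > √(2X_{n+2}) − √(2X_{n+1}). -/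
/-!
Each step solves `e_{k+1} (e_{k+1} - e_k) = δ_{k+1}` for its positive root, and
`x ↦ x (x - e_k)` exceeds `δ_{k+1}` at `x = √(2 X_{k+1})` as soon as `e_k < √(2 X_k)`,
by AM-GM `√(2 X_k) √(2 X_{k+1}) ≤ X_k + X_{k+1}`; this gives the first bound by induction.
For the second, `e_{n+1} - e_n = δ_{n+1} / e_{n+1} > δ_{n+1} / √(2 X_{n+1})`, whereas the
concavity of the square root bounds `√(2 X_{n+2}) - √(2 X_{n+1})` by `δ_{n+2} / √(2 X_{n+1})`,
and `δ` is decreasing.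
-/

open Finset

/-- For `d > 0`, the positive root of `x ^ 2 = a * x + d`. -/
noncomputable def posRoot (a d : ℝ) : ℝ := (a + √(a ^ 2 + 4 * d)) / 2

lemma posRoot_pos (a : ℝ) {d : ℝ} (hd : 0 < d) : 0 < posRoot a d := by
  have : |a| < √(a ^ 2 + 4 * d) := by
    rw [← Real.sqrt_sq_eq_abs]
    exact Real.sqrt_lt_sqrt (sq_nonneg a) (by linarith)
  unfold posRoot
  linarith [neg_abs_le a]

lemma posRoot_mul_sub_self (a : ℝ) {d : ℝ} (hd : 0 ≤ d) :
    posRoot a d * (posRoot a d - a) = d := by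
  have := Real.sq_sqrt (by positivity : 0 ≤ a ^ 2 + 4 * d)
  unfold posRoot
  linear_combination this / 4

lemma lt_posRoot (a : ℝ) {d : ℝ} (hd : 0 < d) : a < posRoot a d := by
  have hr := posRoot_pos a hd
  rw [← posRoot_mul_sub_self a hd.le] at hd
  exact sub_pos.mp (pos_of_mul_pos_right hd hr.le)

lemma posRoot_lt_of_lt_mul_sub {a d x : ℝ} (hd : 0 < d) (hx : 0 < x) (h : d < x * (x - a)) :
    posRoot a d < x := by
  have hr := posRoot_mul_sub_self a hd.le
  have hra := lt_posRoot a hd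
  -- the product equals `x (x - a) - r (r - a)` for `r = posRoot a d`
  have : 0 < (x - posRoot a d) * (x + (posRoot a d - a)) := by nlinarith
  exact sub_pos.mp (pos_of_mul_pos_left this (by linarith))

lemma sqrt_add_sub_sqrt_lt {a h : ℝ} (ha : 0 < a) (hh : 0 < h) :
    √(a + h) - √a < h / (2 * √a) := by
  have hs := Real.sq_sqrt ha.le
  have ht := Real.sq_sqrt (by linarith : 0 ≤ a + h)
  have hsa : 0 < √a := Real.sqrt_pos.mpr ha
  have hst : √a < √(a + h) := Real.sqrt_lt_sqrt ha.le (by linarith)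
  rw [lt_div_iff₀ (by positivity)]
  nlinarith

section Recurrence

variable {δ e : ℕ → ℝ} (hδ : ∀ k, 0 < δ k)
  (hrec : ∀ k, 1 ≤ k → e (k + 1) = posRoot (e k) (δ (k + 1)))
include hδ hrec

lemma lt_sqrt_two_mul_sum (he1 : e 1 = 0) {n : ℕ} (hn : 1 ≤ n) :
    e n < √(2 * ∑ k ∈ Icc 1 n, δ k) := by
  induction n, hn using Nat.le_induction with
  | base => simpa [he1] using hδ 1
  | succ n hn ih =>
    rw [sum_Icc_succ_top (by omega)]
    set X := ∑ k ∈ Icc 1 n, δ k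
    set s := √(2 * (X + δ (n + 1)))
    have hX : 0 ≤ X := sum_nonneg fun k _ => (hδ k).le
    have hs : 0 < s := Real.sqrt_pos.mpr (by linarith [hδ (n + 1)])
    have hs2 : s ^ 2 = 2 * (X + δ (n + 1)) := Real.sq_sqrt (by linarith [hδ (n + 1)])
    have hX2 : √(2 * X) ^ 2 = 2 * X := Real.sq_sqrt (by linarith)
    have amgm := two_mul_le_add_sq (√(2 * X)) s
    have : s * e n < s * √(2 * X) := mul_lt_mul_of_pos_left ih hs
    rw [hrec n hn]
    exact posRoot_lt_of_lt_mul_sub (hδ _) hs (by nlinarith)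

lemma sqrt_two_mul_sum_succ_sub_lt (hanti : Antitone δ) (he1 : e 1 = 0) {n : ℕ} (hn : 1 ≤ n) :
    √(2 * ∑ k ∈ Icc 1 (n + 2), δ k) - √(2 * ∑ k ∈ Icc 1 (n + 1), δ k) < e (n + 1) - e n := by
  rw [sum_Icc_succ_top (by omega : 1 ≤ n + 1 + 1)]
  set X := ∑ k ∈ Icc 1 (n + 1), δ k
  set t := √(2 * X)
  have hX : 0 < X := sum_pos (fun k _ => hδ k) ⟨1, by simp⟩
  have ht : 0 < t := Real.sqrt_pos.mpr (by linarith)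
  have het : e (n + 1) < t := lt_sqrt_two_mul_sum hδ hrec he1 (by omega)
  have he : 0 < e (n + 1) := hrec n hn ▸ posRoot_pos _ (hδ _)
  have hstep : e (n + 1) * (e (n + 1) - e n) = δ (n + 1) :=
    hrec n hn ▸ posRoot_mul_sub_self _ (hδ _).le
  calc √(2 * (X + δ (n + 1 + 1))) - t
      = √(2 * X + 2 * δ (n + 2)) - t := by ring_nf
    _ < 2 * δ (n + 2) / (2 * t) := sqrt_add_sub_sqrt_lt (by linarith) (by linarith [hδ (n + 2)])
    _ = δ (n + 2) / t := by field_simp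
    _ ≤ δ (n + 1) / t := div_le_div_of_nonneg_right (hanti (by omega)) ht.le
    _ < δ (n + 1) / e (n + 1) := div_lt_div_of_pos_left (hδ _) he het
    _ = e (n + 1) - e n := by rw [← hstep]; field_simp

end Recurrence

/-- For `λ ∈ (0,1)`, the sequence `e_1 = 0`,
`e_{k+1} = (e_k + √(e_k² + 4(1-λ)λ^{k+1}))/2` satisfies, with
`X_n = Σ_{k=1}^{n} (1-λ)λ^k`: `e_n < √(2 X_n)` and
`e_{n+1} - e_n > √(2 X_{n+2}) - √(2 X_{n+1})` for all `n ≥ 1`. -/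
theorem stmt19 (lam : ℝ) (hlam : lam ∈ Set.Ioo (0:ℝ) 1)
    (e : ℕ → ℝ) (he1 : e 1 = 0)
    (hrec : ∀ k : ℕ, 1 ≤ k →
      e (k + 1) = (e k + Real.sqrt ((e k) ^ 2 + 4 * (1 - lam) * lam ^ (k + 1))) / 2)
    (X : ℕ → ℝ) (hX : ∀ n : ℕ, X n = ∑ k ∈ Finset.Icc 1 n, (1 - lam) * lam ^ k) :
    ∀ n : ℕ, 1 ≤ n →
      e n < Real.sqrt (2 * X n) ∧
      e (n + 1) - e n > Real.sqrt (2 * X (n + 2)) - Real.sqrt (2 * X (n + 1)) := by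
  obtain ⟨hlam0, hlam1⟩ := hlam
  have hδ : ∀ k, 0 < (1 - lam) * lam ^ k :=
    fun k => mul_pos (sub_pos.mpr hlam1) (pow_pos hlam0 k)
  have hanti : Antitone fun k => (1 - lam) * lam ^ k :=
    (pow_right_anti₀ hlam0.le hlam1.le).const_mul (by linarith)
  have hrec' : ∀ k, 1 ≤ k → e (k + 1) = posRoot (e k) ((1 - lam) * lam ^ (k + 1)) :=
    fun k hk => by rw [hrec k hk, posRoot, mul_assoc]
  intro n hn
  simp only [hX]
  exact ⟨lt_sqrt_two_mul_sum hδ hrec' he1 hn,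
    sqrt_two_mul_sum_succ_sub_lt hδ hrec' hanti he1 hn⟩
end
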